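/- arXiv:1211.6775 — 3 statements merged into one kernel-verified Lean document; each statement's English description precedes it below -/
import Mathlib

section
/- Let X be a finite uniform d-dimensional simplicial complex with d ≥ 2, and let p satisfy (d−1)/(3d−1) < p < 1. Then for every oriented (d−1)-cell σ of X the limit Ẽ_∞^σ = lim_{n→∞} Ẽ_n^σ of the normalized expectation process of the p-lazy (d−1)-walk started at σ exists and equals the orthogonal projection of 1_σ onto Z^{d−1}; moreover, Ẽ_∞^σ is exact for every oriented (d−1)-cell σ if and only if H_{d−1}(X;ℝ) = 0. -/
open scoped BigOperators Classical
open Filter Topology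

noncomputable section

/-- A simplicial complex on a vertex set `V`: a family of finite subsets of `V`
(the cells) closed under taking nonempty subsets. -/
structure SComplex (V : Type*) where
  cells : Set (Finset V)
  down_closed : ∀ ⦃s t : Finset V⦄, s ∈ cells → t ⊆ s → t.Nonempty → t ∈ cells

namespace SComplex

variable {V : Type*} (X : SComplex V)

/-- The tuple `σ` of `n` vertices spans an `(n-1)`-dimensional cell of `X`. -/
def IsCellT {n : ℕ} (σ : Fin n → V) : Prop :=
  Function.Injective σ ∧ Finset.image σ Finset.univ ∈ X.cells

/-- The degree of a cell `s`: the number of cells with one more vertex containing it. -/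
def degS (s : Finset V) : ℕ :=
  Set.ncard {t : Finset V | t ∈ X.cells ∧ t.card = s.card + 1 ∧ s ⊆ t}

/-- Degree of the cell spanned by a tuple. -/
def degT {n : ℕ} (σ : Fin n → V) : ℕ :=
  X.degS (Finset.image σ Finset.univ)

/-- An `(n-1)`-form: an alternating function on oriented `(n-1)`-cells, encoded as a
function on `n`-tuples of vertices which vanishes off the cells of `X` and is
antisymmetric under permutations. -/
def IsForm (n : ℕ) (f : (Fin n → V) → ℝ) : Prop :=
  (∀ σ, ¬ X.IsCellT σ → f σ = 0) ∧
  ∀ (σ : Fin n → V) (π : Equiv.Perm (Fin n)),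
    f (σ ∘ π) = ((Equiv.Perm.sign π : ℤ) : ℝ) * f σ

/-- The Dirac form `𝟙_{σ₀}`: 1 at `σ₀`, -1 at the reversed orientation, 0 elsewhere. -/
def dirac {n : ℕ} (σ₀ : Fin n → V) : (Fin n → V) → ℝ := fun σ =>
  if ∃ π : Equiv.Perm (Fin n), Equiv.Perm.sign π = 1 ∧ σ = σ₀ ∘ π then 1
  else if ∃ π : Equiv.Perm (Fin n), Equiv.Perm.sign π = -1 ∧ σ = σ₀ ∘ π then -1
  else 0

/-- The boundary operator: `(∂f)(σ) = Σ_{v : vσ ∈ X} f(vσ)`. -/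
def bdry {n : ℕ} (f : (Fin (n + 1) → V) → ℝ) : (Fin n → V) → ℝ := fun σ =>
  ∑ᶠ v ∈ {v : V | X.IsCellT (Fin.cons v σ)}, f (Fin.cons v σ)

/-- The weighted sum of `f` over the neighbours of `σ`:
`Σ_{σ' ∼ σ} f(σ')/deg σ' = Σ_{v ◁ σ} Σ_i (-1)^i f(v(σ∖σ_i))/deg(v(σ∖σ_i))`. -/
def nbrW {n : ℕ} (f : (Fin (n + 1) → V) → ℝ) : (Fin (n + 1) → V) → ℝ := fun σ =>
  ∑ᶠ v ∈ {v : V | X.IsCellT (Fin.cons v σ)},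
    ∑ i : Fin (n + 1),
      (-1 : ℝ) ^ (i : ℕ) * f (Fin.cons v (σ ∘ i.succAbove)) /
        (X.degT (Fin.cons v (σ ∘ i.succAbove)) : ℝ)

/-- The unweighted sum of `f` over the neighbours of `σ`: `Σ_{σ' ∼ σ} f(σ')`. -/
def nbrU {n : ℕ} (f : (Fin (n + 1) → V) → ℝ) : (Fin (n + 1) → V) → ℝ := fun σ =>
  ∑ᶠ v ∈ {v : V | X.IsCellT (Fin.cons v σ)},
    ∑ i : Fin (n + 1), (-1 : ℝ) ^ (i : ℕ) * f (Fin.cons v (σ ∘ i.succAbove))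

/-- The upper Laplacian `(Δ⁺f)(σ) = f(σ) - Σ_{σ'∼σ} f(σ')/deg σ'`. -/
def lapUp {n : ℕ} (f : (Fin (n + 1) → V) → ℝ) : (Fin (n + 1) → V) → ℝ := fun σ =>
  f σ - X.nbrW f σ

/-- The transition operator of the `p`-lazy walk:
`(Af)(σ) = p f(σ) + ((1-p)/d) Σ_{σ'∼σ} f(σ')/deg σ'`, where `d = n+1`. -/
def transOp {n : ℕ} (p : ℝ) (f : (Fin (n + 1) → V) → ℝ) : (Fin (n + 1) → V) → ℝ := fun σ =>
  p * f σ + ((1 - p) / ((n : ℝ) + 1)) * X.nbrW f σ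

/-- The normalized expectation process `Ẽ_nn = (d/(p(d-1)+1))^nn • A^nn 𝟙_{σ₀}`. -/
def nexp {n : ℕ} (p : ℝ) (σ₀ : Fin (n + 1) → V) (nn : ℕ) : (Fin (n + 1) → V) → ℝ :=
  (((n : ℝ) + 1) / (p * (n : ℝ) + 1)) ^ nn • (X.transOp p)^[nn] (SComplex.dirac σ₀)

/-- The weighted inner product `⟨f,g⟩ = Σ_{σ ∈ X^{n-1}} f(σ)g(σ)/deg σ`
(each unoriented cell is represented by `n!` tuples). -/
def innerW [Fintype V] {n : ℕ} (f g : (Fin n → V) → ℝ) : ℝ :=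
  (1 / (n.factorial : ℝ)) * ∑ σ : Fin n → V, f σ * g σ / (X.degT σ : ℝ)

/-- The unweighted inner product `⟨f,g⟩ = Σ_{σ ∈ X^{n-1}} f(σ)g(σ)`. -/
def innerU [Fintype V] {n : ℕ} (f g : (Fin n → V) → ℝ) : ℝ :=
  (1 / (n.factorial : ℝ)) * ∑ σ : Fin n → V, f σ * g σ

/-- The norm induced by the weighted inner product. -/
def normW [Fintype V] {n : ℕ} (f : (Fin n → V) → ℝ) : ℝ :=
  Real.sqrt (X.innerW f f)

/-- `f` is a closed `(d-1)`-form (`f ∈ Z^{d-1} = ker ∂_d^*`), characterized by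
orthogonality to the image of `∂_d`. -/
def IsClosedForm [Fintype V] (m : ℕ) (f : (Fin (m + 2) → V) → ℝ) : Prop :=
  X.IsForm (m + 2) f ∧
  ∀ g : (Fin (m + 3) → V) → ℝ, X.IsForm (m + 3) g → X.innerW f (X.bdry g) = 0

/-- `f` is an exact `(d-1)`-form (`f ∈ B^{d-1} = im ∂_{d-1}^*`): `f = ∂_{d-1}^* g` for a
`(d-2)`-form `g`, characterized by the adjoint identity. -/
def IsExactForm [Fintype V] (m : ℕ) (f : (Fin (m + 2) → V) → ℝ) : Prop :=
  X.IsForm (m + 2) f ∧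
  ∃ g : (Fin (m + 1) → V) → ℝ, X.IsForm (m + 1) g ∧
    ∀ h : (Fin (m + 2) → V) → ℝ, X.IsForm (m + 2) h →
      X.innerW f h = innerU g (X.bdry h)

/-- Two tuples span the same oriented cell. -/
def SameOr {n : ℕ} (σ σ' : Fin n → V) : Prop :=
  ∃ π : Equiv.Perm (Fin n), Equiv.Perm.sign π = 1 ∧ σ' = σ ∘ π

/-- The neighbour relation on oriented `(d-1)`-cells: `σ ∼ σ'` iff there is an oriented
`d`-cell of which both `σ` and the reversal of `σ'` are faces with the induced
orientation; equivalently `σ' = (-1)^i v(σ∖σ_i)` for some `v ◁ σ`. -/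
def Nbr {n : ℕ} (σ σ' : Fin (n + 1) → V) : Prop :=
  ∃ (v : V) (i : Fin (n + 1)), X.IsCellT (Fin.cons v σ) ∧
    (if Even (i : ℕ) then SameOr σ' (Fin.cons v (σ ∘ i.succAbove))
     else SameOr σ' (Fin.cons v (σ ∘ i.succAbove) ∘ Equiv.swap 0 1))

/-- `σ` is a face of the oriented cell `τ` with the orientation induced by `τ`. -/
def IsInducedFace {n : ℕ} (σ : Fin (n + 1) → V) (τ : Fin (n + 2) → V) : Prop :=
  ∃ i : Fin (n + 2), if Even (i : ℕ) then SameOr σ (τ ∘ i.succAbove)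
    else SameOr σ (τ ∘ i.succAbove ∘ Equiv.swap 0 1)

/-- The family `𝒯` of `d`-cells (`d = m+2`) admits a disorientation: a choice of
orientation for each cell of `𝒯` such that any two of them sharing a
codimension-one face induce the same orientation on it. -/
def HasDisorientation (m : ℕ) (𝒯 : Set (Finset V)) : Prop :=
  ∃ c : Finset V → (Fin (m + 3) → V),
    (∀ t ∈ 𝒯, Function.Injective (c t) ∧ Finset.image (c t) Finset.univ = t) ∧
    ∀ t ∈ 𝒯, ∀ t' ∈ 𝒯, t ≠ t' → (t ∩ t').card = m + 2 →
      ∃ σ : Fin (m + 2) → V, Function.Injective σ ∧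
        Finset.image σ Finset.univ = t ∩ t' ∧
        IsInducedFace σ (c t) ∧ IsInducedFace σ (c t')

/-- `X` (of dimension `d`) has no simple `d`-loops: no non-backtracking closed chain
of `d`-cells in which consecutive cells share a `(d-1)`-cell. -/
def NoSimpleLoops (d : ℕ) : Prop :=
  ∀ (n : ℕ) (τ : ℕ → Finset V), 2 ≤ n → (∀ i, τ (i + n) = τ i) →
    (∀ i, τ i ∈ X.cells ∧ (τ i).card = d + 1) →
    (∀ i, (τ i ∩ τ (i + 1)) ∈ X.cells ∧ (τ i ∩ τ (i + 1)).card = d) →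
    (∀ i, τ i ≠ τ (i + 2)) → False

end SComplex

open SComplex


/-!
The normalized walk operator is `1 - t Δ⁺` with `t = (1 - p) / (p (d - 1) + 1)`, where the upper
Laplacian `Δ⁺ = ∂_d ∂_d^*` is self-adjoint for the weighted inner product, positive semidefinite,
and bounded by `d + 1` (Cauchy–Schwarz over the `d + 1` facets of a `d`-cell). The condition
`p > (d - 1) / (3d - 1)` is exactly `t (d + 1) < 2`, so the spectrum of `1 - t Δ⁺` lies in
`(-1, 1]` and its powers converge to the orthogonal projection onto `ker Δ⁺ = (im ∂_d)ᗮ = Z^{d-1}`.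

The limits `Ẽ_∞^σ` are the projections of the family `𝟙_σ`, which spans all forms, so they are
all exact iff `Z^{d-1} ≤ B^{d-1}`. Passing to orthogonal complements, with
`(B^{d-1})ᗮ = ker ∂_{d-1}` and `(Z^{d-1})ᗮ = im ∂_d`, this says that every cycle is a boundary.
-/

open scoped RealInnerProductSpace InnerProductSpace

namespace LinearMap.IsSymmetric

variable {E : Type*} [NormedAddCommGroup E] [InnerProductSpace ℝ E] [FiniteDimensional ℝ E]
  {T : E →ₗ[ℝ] E} {t Λ : ℝ}

theorem tendsto_pow_one_sub_smul_apply_of_mem_orthogonal (hT : T.IsSymmetric)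
    (hT₀ : ∀ x, 0 ≤ ⟪T x, x⟫) (ht : 0 < t) (hΛ : ∀ x, ⟪T x, x⟫ ≤ Λ * ‖x‖ ^ 2)
    (htΛ : t * Λ < 2) {y : E} (hy : y ∈ (LinearMap.ker T)ᗮ) :
    Tendsto (fun k => ((1 - t • T) ^ k : E →ₗ[ℝ] E) y) atTop (𝓝 0) := by
  set b := hT.eigenvectorBasis rfl
  set μ := hT.eigenvalues rfl
  have hTb (i) : T (b i) = μ i • b i := hT.apply_eigenvectorBasis rfl i
  have hμ (i) : μ i = ⟪T (b i), b i⟫ := by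
    rw [hTb, real_inner_smul_left, real_inner_self_eq_norm_sq, b.orthonormal.1 i]
    ring
  have hpow (i) (k : ℕ) : ((1 - t • T) ^ k : E →ₗ[ℝ] E) (b i) = (1 - t * μ i) ^ k • b i := by
    induction k with
    | zero => simp
    | succ k ih =>
      rw [pow_succ', Module.End.mul_apply, ih, map_smul, LinearMap.sub_apply,
        LinearMap.smul_apply, hTb, Module.End.one_apply]
      module
  have hexp (k : ℕ) : ((1 - t • T) ^ k : E →ₗ[ℝ] E) y =
      ∑ i, ((1 - t * μ i) ^ k * ⟪b i, y⟫) • b i := by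
    conv_lhs => rw [← b.sum_repr' y]
    simp [map_sum, hpow, smul_smul, mul_comm]
  simp_rw [hexp]
  rw [show (0 : E) = ∑ i, (0 : ℝ) • b i by simp]
  refine tendsto_finsetSum _ fun i _ => Tendsto.smul_const ?_ _
  by_cases hμ0 : μ i = 0
  · have : ⟪b i, y⟫ = 0 := hy (b i) (by rw [LinearMap.mem_ker, hTb, hμ0, zero_smul])
    simp [this]
  · have hμpos : 0 < μ i := lt_of_le_of_ne (hμ i ▸ hT₀ (b i)) (Ne.symm hμ0)
    have hμle : μ i ≤ Λ := by simpa [← hμ, b.orthonormal.1 i] using hΛ (b i)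
    have h1 : |1 - t * μ i| < 1 := by
      rw [abs_lt]
      constructor <;> nlinarith
    simpa using (tendsto_pow_atTop_nhds_zero_of_abs_lt_one h1).mul_const ⟪b i, y⟫

theorem tendsto_pow_one_sub_smul_apply (hT : T.IsSymmetric) (hT₀ : ∀ x, 0 ≤ ⟪T x, x⟫)
    (ht : 0 < t) (hΛ : ∀ x, ⟪T x, x⟫ ≤ Λ * ‖x‖ ^ 2) (htΛ : t * Λ < 2) (x : E) :
    Tendsto (fun k => ((1 - t • T) ^ k : E →ₗ[ℝ] E) x) atTop
      (𝓝 ((LinearMap.ker T).starProjection x)) := by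
  set K := LinearMap.ker T
  have hfix (k : ℕ) : ((1 - t • T) ^ k : E →ₗ[ℝ] E) (K.starProjection x) = K.starProjection x := by
    induction k with
    | zero => simp
    | succ k ih =>
      rw [pow_succ, Module.End.mul_apply]
      simp [LinearMap.mem_ker.1 (K.starProjection_apply_mem x), ih]
  have hlim := (tendsto_const_nhds (x := K.starProjection x)).add
    (hT.tendsto_pow_one_sub_smul_apply_of_mem_orthogonal hT₀ ht hΛ htΛ
      (K.sub_starProjection_mem_orthogonal x))
  rw [add_zero] at hlim
  refine hlim.congr fun k => ?_
  rw [map_sub, hfix]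
  abel

end LinearMap.IsSymmetric

theorem Submodule.le_iff_forall_starProjection_mem {𝕜 E : Type*} [RCLike 𝕜]
    [NormedAddCommGroup E] [InnerProductSpace 𝕜 E] [FiniteDimensional 𝕜 E]
    {K W : Submodule 𝕜 E} {ι : Type*} {e : ι → E}
    (he : ∀ w, (∀ i, ⟪e i, w⟫_𝕜 = 0) → w = 0) :
    (∀ i, K.starProjection (e i) ∈ W) ↔ K ≤ W := by
  refine ⟨fun h z hz => ?_, fun h i => h (K.starProjection_apply_mem _)⟩
  have hspan : span 𝕜 (Set.range e) = ⊤ := by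
    refine orthogonal_eq_bot_iff.1 ((Submodule.eq_bot_iff _).2 fun w hw => ?_)
    exact he w fun i => hw _ (subset_span ⟨i, rfl⟩)
  have hle : span 𝕜 (Set.range e) ≤ W.comap K.starProjection.toLinearMap :=
    span_le.2 (Set.range_subset_iff.2 h)
  rw [← starProjection_eq_self_iff.2 hz]
  exact hle (hspan ▸ mem_top)

lemma sign_cast_mul_self {n : ℕ} (π : Equiv.Perm (Fin n)) :
    ((Equiv.Perm.sign π : ℤ) : ℝ) * ((Equiv.Perm.sign π : ℤ) : ℝ) = 1 := by
  rw [← Int.cast_mul, Int.units_coe_mul_self, Int.cast_one]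

lemma neg_one_pow_sq (k : ℕ) : ((-1 : ℝ) ^ k) ^ 2 = 1 := by
  rw [← pow_mul, mul_comm, pow_mul, neg_one_sq, one_pow]

namespace SComplex

open Finset

variable {V : Type*} (X : SComplex V)

section Tuples

lemma image_univ_comp_perm {n : ℕ} (σ : Fin n → V) (π : Equiv.Perm (Fin n)) :
    image (σ ∘ π) univ = image σ univ := by
  rw [image_comp, image_univ_equiv]

lemma image_univ_cons {n : ℕ} (v : V) (σ : Fin n → V) :
    image (Fin.cons v σ : Fin (n + 1) → V) univ = insert v (image σ univ) := by
  ext x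
  simp [Fin.exists_fin_succ, eq_comm]

lemma cons_comp_perm {n : ℕ} (v : V) (σ : Fin n → V) (π : Equiv.Perm (Fin n)) :
    (Fin.cons v (σ ∘ π) : Fin (n + 1) → V) =
      Fin.cons v σ ∘ Equiv.Perm.decomposeFin.symm (0, π) := by
  ext k
  cases k using Fin.cases <;> simp

lemma isCellT_comp_perm {n : ℕ} (σ : Fin n → V) (π : Equiv.Perm (Fin n)) :
    X.IsCellT (σ ∘ π) ↔ X.IsCellT σ := by
  rw [IsCellT, IsCellT, image_univ_comp_perm, Function.Injective.of_comp_iff' _ π.bijective]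

lemma degT_comp_perm {n : ℕ} (σ : Fin n → V) (π : Equiv.Perm (Fin n)) :
    X.degT (σ ∘ π) = X.degT σ := by
  rw [degT, degT, image_univ_comp_perm]

lemma isCellT_insertNth {n : ℕ} (i : Fin (n + 1)) (v : V) (σ : Fin n → V) :
    X.IsCellT (i.insertNth v σ) ↔ X.IsCellT (Fin.cons v σ) := by
  rw [← Fin.cons_comp_cycleRange, isCellT_comp_perm]

def DegPos (n : ℕ) : Prop := ∀ σ : Fin n → V, X.IsCellT σ → 0 < X.degT σ

variable {X}

lemma IsCellT.tail {n : ℕ} {v : V} {σ : Fin (n + 1) → V} (h : X.IsCellT (Fin.cons v σ)) :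
    X.IsCellT σ := by
  refine ⟨(Fin.cons_injective_iff.1 h.1).2, X.down_closed h.2 ?_ ⟨σ 0, by simp⟩⟩
  rw [image_univ_cons]
  exact subset_insert _ _

lemma isCellT_cons_iff {n : ℕ} {v : V} {σ : Fin n → V} (hσ : Function.Injective σ) :
    X.IsCellT (Fin.cons v σ) ↔ v ∉ image σ univ ∧ insert v (image σ univ) ∈ X.cells := by
  simp [IsCellT, Fin.cons_injective_iff, hσ, image_univ_cons]

variable [Fintype V]

lemma card_cofaces {n : ℕ} {σ : Fin n → V} (hσ : X.IsCellT σ) :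
    #{v | X.IsCellT (Fin.cons v σ)} = X.degT σ := by
  rw [← Set.ncard_coe_finset, degT, degS]
  refine Set.ncard_congr (fun v _ => insert v (image σ univ)) ?_ ?_ ?_
  · intro v hv
    obtain ⟨hvσ, hcell⟩ := (isCellT_cons_iff hσ.1).1 (by simpa using hv)
    exact ⟨hcell, card_insert_of_notMem hvσ, subset_insert _ _⟩
  · intro a b ha _ hab
    exact (insert_inj ((isCellT_cons_iff hσ.1).1 (by simpa using ha)).1).1 hab
  · rintro t ⟨ht, hcard, hsub⟩
    obtain ⟨v, hv, rfl⟩ := exists_eq_insert_iff.2 ⟨hsub, hcard.symm⟩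
    exact ⟨v, by simpa using (isCellT_cons_iff hσ.1).2 ⟨hv, ht⟩, rfl⟩

lemma degPos_of_uniform {n : ℕ}
    (huni : ∀ s ∈ X.cells, ∃ t ∈ X.cells, t.card = n + 1 ∧ s ⊆ t) : X.DegPos n := by
  intro σ hσ
  obtain ⟨t, ht, hcard, hsub⟩ := huni _ hσ.2
  rw [degT, degS, Set.ncard_pos (Set.toFinite _)]
  exact ⟨t, ht, by rw [hcard, card_image_of_injective _ hσ.1, card_fin], hsub⟩

end Tuples

section Boundary

def formSubmodule (n : ℕ) : Submodule ℝ ((Fin n → V) → ℝ) where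
  carrier := {f | X.IsForm n f}
  add_mem' {f g} hf hg := ⟨fun σ hσ => by simp [hf.1 σ hσ, hg.1 σ hσ],
    fun σ π => by simp [hf.2 σ π, hg.2 σ π, mul_add]⟩
  zero_mem' := ⟨fun _ _ => rfl, fun _ _ => by simp⟩
  smul_mem' c f hf := ⟨fun σ hσ => by simp [hf.1 σ hσ],
    fun σ π => by simp [hf.2 σ π, mul_left_comm]⟩

variable {X}

lemma IsForm.apply_insertNth {n : ℕ} {f : (Fin (n + 1) → V) → ℝ} (hf : X.IsForm (n + 1) f)
    (i : Fin (n + 1)) (v : V) (σ : Fin n → V) :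
    f (i.insertNth v σ) = (-1) ^ (i : ℕ) * f (Fin.cons v σ) := by
  rw [← Fin.cons_comp_cycleRange, hf.2, Fin.sign_cycleRange]
  push_cast
  rfl

lemma IsForm.ite_isCellT_mul {n : ℕ} {f : (Fin n → V) → ℝ} (hf : X.IsForm n f) (a : ℝ)
    (σ : Fin n → V) : (if X.IsCellT σ then a else 0) * f σ = a * f σ := by
  split_ifs with hσ
  · rfl
  · rw [hf.1 σ hσ, zero_mul, mul_zero]

variable [Fintype V]

lemma finsum_mem_setOf_eq_sum_filter (P : V → Prop) (h : V → ℝ) :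
    ∑ᶠ v ∈ {v | P v}, h v = ∑ v with P v, h v := by
  rw [← finsum_mem_coe_finset]
  simp

lemma bdry_eq_sum {n : ℕ} (f : (Fin (n + 1) → V) → ℝ) (σ : Fin n → V) :
    X.bdry f σ = ∑ v with X.IsCellT (Fin.cons v σ), f (Fin.cons v σ) :=
  finsum_mem_setOf_eq_sum_filter _ _

lemma IsForm.bdry_eq_sum {n : ℕ} {f : (Fin (n + 1) → V) → ℝ} (hf : X.IsForm (n + 1) f)
    (σ : Fin n → V) : X.bdry f σ = ∑ v, f (Fin.cons v σ) := by
  rw [SComplex.bdry_eq_sum]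
  exact sum_filter_of_ne fun v _ hv => by_contra fun hc => hv (hf.1 _ hc)

lemma IsForm.bdry {n : ℕ} {f : (Fin (n + 2) → V) → ℝ} (hf : X.IsForm (n + 2) f) :
    X.IsForm (n + 1) (X.bdry f) := by
  refine ⟨fun σ hσ => ?_, fun σ π => ?_⟩
  · rw [hf.bdry_eq_sum]
    exact sum_eq_zero fun v _ => hf.1 _ fun hc => hσ hc.tail
  · simp_rw [hf.bdry_eq_sum, mul_sum, cons_comp_perm, hf.2]
    simp

variable (X) in
def bdryLinear (n : ℕ) : ((Fin (n + 1) → V) → ℝ) →ₗ[ℝ] ((Fin n → V) → ℝ) where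
  toFun := X.bdry
  map_add' f g := by ext σ; simp [SComplex.bdry_eq_sum, sum_add_distrib]
  map_smul' c f := by ext σ; simp [SComplex.bdry_eq_sum, mul_sum]

end Boundary

section AltFaceSum

def IsAlternating {n : ℕ} (g : (Fin n → V) → ℝ) : Prop :=
  ∀ (σ : Fin n → V) (π : Equiv.Perm (Fin n)), g (σ ∘ π) = ((Equiv.Perm.sign π : ℤ) : ℝ) * g σ

def altFaceSum {n : ℕ} (g : (Fin n → V) → ℝ) (τ : Fin (n + 1) → V) : ℝ :=
  ∑ i : Fin (n + 1), (-1 : ℝ) ^ (i : ℕ) * g (τ ∘ i.succAbove)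

/-- The permutation `0 ↦ i`, `k + 1 ↦ i.succAbove (e k)`. These parametrize `Perm (Fin (n + 1))`
and turn sums over permutations into sums over facets. -/
def insertPerm {n : ℕ} (i : Fin (n + 1)) (e : Equiv.Perm (Fin n)) : Equiv.Perm (Fin (n + 1)) :=
  i.cycleRange.symm * Equiv.Perm.decomposeFin.symm (0, e)

lemma insertPerm_zero {n : ℕ} (i : Fin (n + 1)) (e : Equiv.Perm (Fin n)) :
    insertPerm i e 0 = i := by
  simp [insertPerm, Fin.cycleRange_symm_zero]

lemma comp_insertPerm_comp_succ {n : ℕ} (τ : Fin (n + 1) → V) (i : Fin (n + 1))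
    (e : Equiv.Perm (Fin n)) : τ ∘ insertPerm i e ∘ Fin.succ = (τ ∘ i.succAbove) ∘ e := by
  ext k
  simp [insertPerm, Fin.cycleRange_symm_succ]

lemma sign_insertPerm {n : ℕ} (i : Fin (n + 1)) (e : Equiv.Perm (Fin n)) :
    ((Equiv.Perm.sign (insertPerm i e) : ℤ) : ℝ) =
      (-1) ^ (i : ℕ) * ((Equiv.Perm.sign e : ℤ) : ℝ) := by
  simp [insertPerm, Fin.sign_cycleRange]

lemma insertPerm_bijective {n : ℕ} :
    Function.Bijective fun x : Fin (n + 1) × Equiv.Perm (Fin n) => insertPerm x.1 x.2 := by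
  refine (Fintype.bijective_iff_injective_and_card _).2 ⟨?_, ?_⟩
  · rintro ⟨i, e⟩ ⟨i', e'⟩ h
    obtain rfl : i = i' := by simpa [insertPerm_zero] using congrArg (· 0) h
    have := Equiv.Perm.decomposeFin.symm.injective (mul_left_cancel h)
    simp_all
  · simp [Fintype.card_perm, Nat.factorial_succ]

variable {n : ℕ} {g : (Fin n → V) → ℝ}

lemma sum_sign_mul_comp_succ (hg : IsAlternating g) (τ : Fin (n + 1) → V) :
    ∑ ρ : Equiv.Perm (Fin (n + 1)), ((Equiv.Perm.sign ρ : ℤ) : ℝ) * g (τ ∘ ρ ∘ Fin.succ) =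
      n.factorial * altFaceSum g τ := by
  rw [← insertPerm_bijective.sum_comp, Fintype.sum_prod_type, altFaceSum, mul_sum]
  refine sum_congr rfl fun i _ => ?_
  have (e : Equiv.Perm (Fin n)) :
      ((Equiv.Perm.sign (insertPerm i e) : ℤ) : ℝ) * g (τ ∘ insertPerm i e ∘ Fin.succ) =
        (-1) ^ (i : ℕ) * g (τ ∘ i.succAbove) := by
    rw [comp_insertPerm_comp_succ, hg, sign_insertPerm]
    linear_combination (-1 : ℝ) ^ (i : ℕ) * g (τ ∘ i.succAbove) * sign_cast_mul_self e
  simp [this, Fintype.card_perm]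

lemma altFaceSum_comp_perm (hg : IsAlternating g) (τ : Fin (n + 1) → V)
    (π : Equiv.Perm (Fin (n + 1))) :
    altFaceSum g (τ ∘ π) = ((Equiv.Perm.sign π : ℤ) : ℝ) * altFaceSum g τ := by
  refine mul_left_cancel₀ (Nat.cast_ne_zero.2 n.factorial_ne_zero) ?_
  rw [← sum_sign_mul_comp_succ hg, mul_left_comm, ← sum_sign_mul_comp_succ hg, mul_sum]
  conv_rhs => rw [← Equiv.sum_comp (Equiv.mulLeft π)]
  refine sum_congr rfl fun ρ _ => ?_
  rw [Equiv.coe_mulLeft, Equiv.Perm.sign_mul, Units.val_mul, Int.cast_mul, Equiv.Perm.coe_mul]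
  simp only [Function.comp_assoc]
  linear_combination (-((Equiv.Perm.sign ρ : ℤ) : ℝ) * g (τ ∘ π ∘ ρ ∘ Fin.succ)) *
    sign_cast_mul_self π

lemma altFaceSum_cons (g : (Fin (n + 1) → V) → ℝ) (v : V) (σ : Fin (n + 1) → V) :
    altFaceSum g (Fin.cons v σ) =
      g σ - ∑ j : Fin (n + 1), (-1) ^ (j : ℕ) * g (Fin.cons v (σ ∘ j.succAbove)) := by
  rw [altFaceSum, Fin.sum_univ_succ, Fin.succAbove_zero, Fin.cons_comp_succ]
  simp only [Fin.cons_comp_succ_succAbove, Fin.val_succ, pow_succ]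
  simp [sub_eq_add_neg, sum_neg_distrib]
  rfl

variable [Fintype V]

lemma sum_insertNth (i : Fin (n + 1)) (G : (Fin (n + 1) → V) → ℝ) :
    ∑ τ, G τ = ∑ σ : Fin n → V, ∑ v, G (i.insertNth v σ) := by
  rw [← (Fin.insertNthEquiv (fun _ => V) i).sum_comp, Fintype.sum_prod_type, sum_comm]
  rfl

variable {X}

lemma sum_altFaceSum_mul (G : (Fin n → V) → ℝ) {h : (Fin (n + 1) → V) → ℝ}
    (hh : X.IsForm (n + 1) h) :
    ∑ τ, altFaceSum G τ * h τ = (n + 1) * ∑ σ, G σ * X.bdry h σ := by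
  simp_rw [altFaceSum, sum_mul]
  rw [sum_comm]
  have (i : Fin (n + 1)) :
      ∑ τ, (-1) ^ (i : ℕ) * G (τ ∘ i.succAbove) * h τ = ∑ σ, G σ * X.bdry h σ := by
    rw [sum_insertNth i]
    refine sum_congr rfl fun σ _ => ?_
    rw [hh.bdry_eq_sum, mul_sum]
    refine sum_congr rfl fun v _ => ?_
    rw [Fin.insertNth_comp_succAbove, hh.apply_insertNth, mul_mul_mul_comm, ← sq,
      neg_one_pow_sq, one_mul]
  simp [this]

end AltFaceSum

section InnerProducts

variable [Fintype V] {n : ℕ}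

lemma innerW_comm (f g : (Fin n → V) → ℝ) : X.innerW f g = X.innerW g f := by
  simp only [innerW, mul_comm (f _)]

lemma innerW_add_left (f g h : (Fin n → V) → ℝ) :
    X.innerW (f + g) h = X.innerW f h + X.innerW g h := by
  simp only [innerW, Pi.add_apply, add_mul, add_div, sum_add_distrib, mul_add]

lemma innerW_smul_left (c : ℝ) (f g : (Fin n → V) → ℝ) :
    X.innerW (c • f) g = c * X.innerW f g := by
  simp only [innerW, Pi.smul_apply, smul_eq_mul, mul_assoc, ← mul_div_assoc, mul_sum,
    mul_left_comm c]

lemma innerW_self_nonneg (f : (Fin n → V) → ℝ) : 0 ≤ X.innerW f f :=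
  mul_nonneg (by positivity) (sum_nonneg fun _ _ => div_nonneg (mul_self_nonneg _) (by positivity))

variable {X}

lemma IsForm.eq_zero_of_innerW_self (hdeg : X.DegPos n) {f : (Fin n → V) → ℝ}
    (hf : X.IsForm n f) (h : X.innerW f f = 0) : f = 0 := by
  have hsum := (sum_eq_zero_iff_of_nonneg fun σ _ =>
    div_nonneg (mul_self_nonneg (f σ)) (Nat.cast_nonneg (X.degT σ))).1
      ((mul_eq_zero.1 h).resolve_left (by positivity))
  ext σ
  by_cases hσ : X.IsCellT σ
  · simpa [(hdeg σ hσ).ne'] using hsum σ (mem_univ σ)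
  · exact hf.1 σ hσ

lemma innerU_comm (f g : (Fin n → V) → ℝ) : innerU f g = innerU g f := by
  simp only [innerU, mul_comm (f _)]

lemma innerU_self_nonneg (f : (Fin n → V) → ℝ) : 0 ≤ innerU f f :=
  mul_nonneg (by positivity) (sum_nonneg fun _ _ => mul_self_nonneg _)

lemma eq_zero_of_innerU_self {f : (Fin n → V) → ℝ} (h : innerU f f = 0) : f = 0 := by
  have hsum := (sum_eq_zero_iff_of_nonneg fun σ _ => mul_self_nonneg (f σ)).1
    ((mul_eq_zero.1 h).resolve_left (by positivity))
  ext σ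
  simpa using hsum σ (mem_univ σ)

end InnerProducts

section Adjoints

/-- The adjoint of `bdry` from weighted `n`-tuples to unweighted `(n + 1)`-tuples
(`innerW_bdry`); `bdryAdjU` is the adjoint with the weights on the other side
(`innerW_bdryAdjU`). -/
def bdryAdjW (n : ℕ) : ((Fin n → V) → ℝ) →ₗ[ℝ] ((Fin (n + 1) → V) → ℝ) where
  toFun f τ := if X.IsCellT τ then altFaceSum (fun σ => f σ / X.degT σ) τ else 0
  map_add' f g := by
    ext τ
    split_ifs <;> simp [*, altFaceSum, add_div, mul_add, sum_add_distrib]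
  map_smul' c f := by
    ext τ
    split_ifs <;> simp [*, altFaceSum, mul_div_assoc, mul_sum, mul_left_comm]

def bdryAdjU (n : ℕ) : ((Fin n → V) → ℝ) →ₗ[ℝ] ((Fin (n + 1) → V) → ℝ) where
  toFun g τ := if X.IsCellT τ then X.degT τ * altFaceSum g τ else 0
  map_add' f g := by
    ext τ
    split_ifs <;> simp [*, altFaceSum, mul_add, sum_add_distrib]
  map_smul' c f := by
    ext τ
    split_ifs <;> simp [*, altFaceSum, mul_sum, mul_left_comm]

variable {X} {n : ℕ}

lemma bdryAdjW_apply (f : (Fin n → V) → ℝ) (τ : Fin (n + 1) → V) :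
    X.bdryAdjW n f τ =
      if X.IsCellT τ then altFaceSum (fun σ => f σ / X.degT σ) τ else 0 := rfl

lemma bdryAdjU_apply (g : (Fin n → V) → ℝ) (τ : Fin (n + 1) → V) :
    X.bdryAdjU n g τ = if X.IsCellT τ then X.degT τ * altFaceSum g τ else 0 := rfl

lemma IsForm.bdryAdjW {f : (Fin n → V) → ℝ} (hf : X.IsForm n f) :
    X.IsForm (n + 1) (X.bdryAdjW n f) := by
  have hg : IsAlternating fun σ => f σ / X.degT σ := fun σ π => by
    simp only [hf.2 σ π, degT_comp_perm, mul_div_assoc]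
  refine ⟨fun τ hτ => if_neg hτ, fun τ π => ?_⟩
  simp only [bdryAdjW_apply, isCellT_comp_perm, altFaceSum_comp_perm hg]
  split_ifs <;> simp

lemma IsForm.bdryAdjU {g : (Fin n → V) → ℝ} (hg : X.IsForm n g) :
    X.IsForm (n + 1) (X.bdryAdjU n g) := by
  refine ⟨fun τ hτ => if_neg hτ, fun τ π => ?_⟩
  simp only [bdryAdjU_apply, isCellT_comp_perm, degT_comp_perm, altFaceSum_comp_perm hg.2]
  split_ifs <;> ring

variable [Fintype V]

lemma innerW_bdry (f : (Fin (n + 1) → V) → ℝ) {g : (Fin (n + 2) → V) → ℝ}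
    (hg : X.IsForm (n + 2) g) :
    X.innerW f (X.bdry g) = innerU (X.bdryAdjW (n + 1) f) g := by
  simp only [innerW, innerU, bdryAdjW_apply, hg.ite_isCellT_mul, sum_altFaceSum_mul _ hg,
    Nat.factorial_succ (n + 1)]
  push_cast
  field_simp

lemma innerW_bdryAdjU (hdeg : X.DegPos (n + 1)) (g : (Fin n → V) → ℝ)
    {h : (Fin (n + 1) → V) → ℝ} (hh : X.IsForm (n + 1) h) :
    X.innerW (X.bdryAdjU n g) h = innerU g (X.bdry h) := by
  have hcell (τ : Fin (n + 1) → V) :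
      X.bdryAdjU n g τ * h τ / X.degT τ = altFaceSum g τ * h τ := by
    rw [bdryAdjU_apply, hh.ite_isCellT_mul]
    by_cases hτ : X.IsCellT τ
    · field_simp [(hdeg τ hτ).ne']
    · simp [hh.1 τ hτ]
  simp only [innerW, innerU, hcell, sum_altFaceSum_mul _ hh, Nat.factorial_succ n]
  push_cast
  field_simp

lemma bdry_bdryAdjW (hdeg : X.DegPos (n + 1)) {f : (Fin (n + 1) → V) → ℝ}
    (hf : X.IsForm (n + 1) f) : X.bdry (X.bdryAdjW (n + 1) f) = X.lapUp f := by
  ext σ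
  simp only [hf.bdryAdjW.bdry_eq_sum, bdryAdjW_apply, ← sum_filter, altFaceSum_cons, lapUp,
    nbrW, finsum_mem_setOf_eq_sum_filter, sum_sub_distrib, sum_const, nsmul_eq_mul]
  by_cases hσ : X.IsCellT σ
  · rw [card_cofaces hσ, mul_div_cancel₀ _ (Nat.cast_ne_zero.2 (hdeg σ hσ).ne')]
    simp only [mul_div_assoc]
  · have hcof (v : V) : ¬ X.IsCellT (Fin.cons v σ) := fun h => hσ h.tail
    simp [hcof, hf.1 σ hσ]

lemma sum_ite_isCellT_facet_sq (hdeg : X.DegPos (n + 1)) {f : (Fin (n + 1) → V) → ℝ}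
    (hf : X.IsForm (n + 1) f) (i : Fin (n + 2)) :
    ∑ τ : Fin (n + 2) → V, (if X.IsCellT τ then
      (f (τ ∘ i.succAbove) / X.degT (τ ∘ i.succAbove)) ^ 2 else 0) =
      ∑ σ, f σ * f σ / X.degT σ := by
  rw [sum_insertNth i]
  refine sum_congr rfl fun σ _ => ?_
  simp only [Fin.insertNth_comp_succAbove, isCellT_insertNth, ← sum_filter, sum_const,
    nsmul_eq_mul]
  by_cases hσ : X.IsCellT σ
  · rw [card_cofaces hσ]
    field_simp [(hdeg σ hσ).ne']
  · simp [hf.1 σ hσ]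

lemma innerU_bdryAdjW_self_le (hdeg : X.DegPos (n + 1)) {f : (Fin (n + 1) → V) → ℝ}
    (hf : X.IsForm (n + 1) f) :
    innerU (X.bdryAdjW (n + 1) f) (X.bdryAdjW (n + 1) f) ≤ (n + 2) * X.innerW f f := by
  have hpt (τ : Fin (n + 2) → V) : X.bdryAdjW (n + 1) f τ * X.bdryAdjW (n + 1) f τ ≤
      (n + 2) * ∑ i : Fin (n + 2), (if X.IsCellT τ then
        (f (τ ∘ i.succAbove) / X.degT (τ ∘ i.succAbove)) ^ 2 else 0) := by
    rw [bdryAdjW_apply]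
    split_ifs
    · rw [← sq, altFaceSum]
      refine sq_sum_le_card_mul_sum_sq.trans (le_of_eq ?_)
      simp only [mul_pow, neg_one_pow_sq, card_univ, Fintype.card_fin, one_mul]
      push_cast
      ring
    · simp
  calc innerU (X.bdryAdjW (n + 1) f) (X.bdryAdjW (n + 1) f)
      ≤ 1 / (n + 2).factorial * ∑ τ : Fin (n + 2) → V, (n + 2) * ∑ i : Fin (n + 2),
          (if X.IsCellT τ then (f (τ ∘ i.succAbove) / X.degT (τ ∘ i.succAbove)) ^ 2 else 0) :=
        mul_le_mul_of_nonneg_left (sum_le_sum fun τ _ => hpt τ) (by positivity)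
    _ = (n + 2) * X.innerW f f := by
        rw [← mul_sum, sum_comm]
        simp only [sum_ite_isCellT_facet_sq hdeg hf, sum_const, card_univ, Fintype.card_fin,
          nsmul_eq_mul, innerW, Nat.factorial_succ (n + 1)]
        push_cast
        field_simp
        ring

end Adjoints

section Dirac

variable {X} {n : ℕ} {σ₀ : Fin n → V}

lemma comp_perm_inj (hσ₀ : Function.Injective σ₀) {π π' : Equiv.Perm (Fin n)} :
    σ₀ ∘ π = σ₀ ∘ π' ↔ π = π' :=
  ⟨fun h => Equiv.ext fun k => hσ₀ (congrFun h k), fun h => h ▸ rfl⟩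

lemma dirac_comp_perm (hσ₀ : Function.Injective σ₀) (π : Equiv.Perm (Fin n)) :
    dirac σ₀ (σ₀ ∘ π) = ((Equiv.Perm.sign π : ℤ) : ℝ) := by
  rcases Int.units_eq_one_or (Equiv.Perm.sign π) with hs | hs <;>
    simp [dirac, comp_perm_inj hσ₀, hs]

lemma dirac_of_forall_ne {σ : Fin n → V} (h : ∀ π : Equiv.Perm (Fin n), σ ≠ σ₀ ∘ π) :
    dirac σ₀ σ = 0 := by
  simp [dirac, h]

lemma isForm_dirac (hσ₀ : X.IsCellT σ₀) : X.IsForm n (dirac σ₀) := by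
  refine ⟨fun σ hσ => dirac_of_forall_ne fun π h => hσ ?_, fun σ π => ?_⟩
  · rwa [h, isCellT_comp_perm]
  · by_cases horb : ∃ ρ : Equiv.Perm (Fin n), σ = σ₀ ∘ ρ
    · obtain ⟨ρ, rfl⟩ := horb
      rw [Function.comp_assoc, ← Equiv.Perm.coe_mul, dirac_comp_perm hσ₀.1,
        dirac_comp_perm hσ₀.1, Equiv.Perm.sign_mul, Units.val_mul, Int.cast_mul, mul_comm]
    · simp only [not_exists] at horb
      rw [dirac_of_forall_ne horb, mul_zero]
      refine dirac_of_forall_ne fun ρ h => horb (ρ * π⁻¹) ?_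
      rw [Equiv.Perm.coe_mul, ← Function.comp_assoc, ← h, Function.comp_assoc]
      simp

lemma innerW_dirac [Fintype V] {f : (Fin n → V) → ℝ} (hf : X.IsForm n f)
    (hσ₀ : X.IsCellT σ₀) : X.innerW f (dirac σ₀) = f σ₀ / X.degT σ₀ := by
  rw [innerW, ← sum_subset (subset_univ (univ.image fun π : Equiv.Perm (Fin n) => σ₀ ∘ π)),
    sum_image fun π _ π' _ => (comp_perm_inj hσ₀.1).1]
  · have (π : Equiv.Perm (Fin n)) :
        f (σ₀ ∘ π) * dirac σ₀ (σ₀ ∘ π) / X.degT (σ₀ ∘ π) = f σ₀ / X.degT σ₀ := by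
      rw [dirac_comp_perm hσ₀.1, hf.2, degT_comp_perm, mul_comm, ← mul_assoc,
        sign_cast_mul_self, one_mul]
    simp only [this, sum_const, card_univ, Fintype.card_perm, Fintype.card_fin, nsmul_eq_mul]
    field_simp
  · intro σ _ hσ
    rw [dirac_of_forall_ne fun π h => hσ (mem_image.2 ⟨π, mem_univ _, h.symm⟩), mul_zero,
      zero_div]

end Dirac

section Walk

variable {X} {n : ℕ}

lemma smul_transOp {p : ℝ} (hp : p * n + 1 ≠ 0) (f : (Fin (n + 1) → V) → ℝ) :
    ((n + 1) / (p * n + 1)) • X.transOp p f = f - ((1 - p) / (p * n + 1)) • X.lapUp f := by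
  ext σ
  have hu := mul_inv_cancel₀ hp
  have hw := mul_inv_cancel₀ (n.cast_add_one_ne_zero (R := ℝ))
  simp only [transOp, lapUp, Pi.smul_apply, Pi.sub_apply, smul_eq_mul, div_eq_mul_inv]
  linear_combination (1 - p) * (p * n + 1)⁻¹ * X.nbrW f σ * hw + f σ * hu

variable [Fintype V]

lemma nbrW_smul (c : ℝ) (f : (Fin (n + 1) → V) → ℝ) : X.nbrW (c • f) = c • X.nbrW f := by
  ext σ
  simp only [nbrW, finsum_mem_setOf_eq_sum_filter, Pi.smul_apply, smul_eq_mul, mul_sum]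
  exact sum_congr rfl fun v _ => sum_congr rfl fun i _ => by ring

lemma transOp_smul (p c : ℝ) (f : (Fin (n + 1) → V) → ℝ) :
    X.transOp p (c • f) = c • X.transOp p f := by
  ext σ
  simp only [transOp, nbrW_smul, Pi.smul_apply, smul_eq_mul]
  ring

lemma nexp_eq_iterate (p : ℝ) (σ₀ : Fin (n + 1) → V) (k : ℕ) :
    X.nexp p σ₀ k = (fun f => ((n + 1) / (p * n + 1)) • X.transOp p f)^[k] (dirac σ₀) := by
  induction k with
  | zero => simp [nexp]
  | succ k ih =>
    rw [Function.iterate_succ_apply', ← ih, nexp, nexp, transOp_smul, smul_smul, pow_succ',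
      Function.iterate_succ_apply']

end Walk

section FormSpace

variable (n : ℕ)

/-- The forms of arity `n`, as a type synonym: the function space already carries the sup norm,
and here it gets the weighted inner product `innerW` instead. -/
def Forms : Type _ := X.formSubmodule n

namespace Forms

instance : AddCommGroup (X.Forms n) := inferInstanceAs (AddCommGroup (X.formSubmodule n))

instance : Module ℝ (X.Forms n) := inferInstanceAs (Module ℝ (X.formSubmodule n))

variable {X n}

def val : X.Forms n →ₗ[ℝ] (Fin n → V) → ℝ := (X.formSubmodule n).subtype

lemma isForm_val (x : X.Forms n) : X.IsForm n (val x) := x.2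

lemma val_injective : Function.Injective (val : X.Forms n → (Fin n → V) → ℝ) :=
  Subtype.val_injective

def mk (f : (Fin n → V) → ℝ) (hf : X.IsForm n f) : X.Forms n := ⟨f, hf⟩

@[simp] lemma val_mk (f : (Fin n → V) → ℝ) (hf : X.IsForm n f) : val (mk f hf) = f := rfl

def dirac {σ₀ : Fin n → V} (hσ₀ : X.IsCellT σ₀) : X.Forms n :=
  mk (SComplex.dirac σ₀) (isForm_dirac hσ₀)

variable [Fintype V]

instance : FiniteDimensional ℝ (X.Forms n) :=
  inferInstanceAs (FiniteDimensional ℝ (X.formSubmodule n))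

variable [Fact (X.DegPos n)]

instance : InnerProductSpace.Core ℝ (X.Forms n) where
  inner x y := X.innerW (val x) (val y)
  conj_inner_symm x y := X.innerW_comm _ _
  re_inner_nonneg x := X.innerW_self_nonneg _
  add_left x y z := by simp only [map_add, innerW_add_left]
  smul_left x y r := by simp only [map_smul, innerW_smul_left]; rfl
  definite x h := val_injective <| by
    rw [map_zero]
    exact (isForm_val x).eq_zero_of_innerW_self Fact.out h

instance : NormedAddCommGroup (X.Forms n) := InnerProductSpace.Core.toNormedAddCommGroup (𝕜 := ℝ)

instance : InnerProductSpace ℝ (X.Forms n) := InnerProductSpace.ofCore _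

lemma inner_def (x y : X.Forms n) : ⟪x, y⟫ = X.innerW (val x) (val y) := rfl

lemma continuous_val : Continuous (val : X.Forms n → (Fin n → V) → ℝ) :=
  LinearMap.continuous_of_finiteDimensional _

end Forms

end FormSpace

namespace Forms

variable {X} {n : ℕ}

def bdryAdjWMap : X.Forms (n + 1) →ₗ[ℝ] X.Forms (n + 2) :=
  (X.bdryAdjW (n + 1)).restrict fun _ hf => IsForm.bdryAdjW hf

def bdryAdjUMap : X.Forms n →ₗ[ℝ] X.Forms (n + 1) :=
  (X.bdryAdjU n).restrict fun _ hf => IsForm.bdryAdjU hf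

lemma val_bdryAdjWMap (x : X.Forms (n + 1)) :
    val (bdryAdjWMap x) = X.bdryAdjW (n + 1) (val x) := rfl

lemma val_bdryAdjUMap (x : X.Forms n) : val (bdryAdjUMap x) = X.bdryAdjU n (val x) := rfl

variable [Fintype V]

def bdryMap : X.Forms (n + 2) →ₗ[ℝ] X.Forms (n + 1) :=
  (X.bdryLinear (n + 1)).restrict fun _ hf => IsForm.bdry hf

def laplacian : Module.End ℝ (X.Forms (n + 1)) := bdryMap ∘ₗ bdryAdjWMap

lemma val_bdryMap (x : X.Forms (n + 2)) : val (bdryMap x) = X.bdry (val x) := rfl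

section Laplacian

variable [Fact (X.DegPos (n + 1))]

lemma val_laplacian (x : X.Forms (n + 1)) : val (laplacian x) = X.lapUp (val x) :=
  bdry_bdryAdjW Fact.out (isForm_val x)

lemma inner_bdryMap (x : X.Forms (n + 1)) (g : X.Forms (n + 2)) :
    ⟪bdryMap g, x⟫ = innerU (val (bdryAdjWMap x)) (val g) := by
  rw [inner_def, innerW_comm, val_bdryMap, innerW_bdry _ (isForm_val g), val_bdryAdjWMap]

lemma inner_laplacian (x y : X.Forms (n + 1)) :
    ⟪laplacian x, y⟫ = innerU (val (bdryAdjWMap y)) (val (bdryAdjWMap x)) :=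
  inner_bdryMap y (bdryAdjWMap x)

lemma laplacian_isSymmetric : (laplacian : Module.End ℝ (X.Forms (n + 1))).IsSymmetric :=
  fun x y => by rw [inner_laplacian, real_inner_comm, inner_laplacian, innerU_comm]

lemma inner_laplacian_self_nonneg (x : X.Forms (n + 1)) : 0 ≤ ⟪laplacian x, x⟫ := by
  rw [inner_laplacian]
  exact innerU_self_nonneg _

lemma inner_laplacian_self_le (x : X.Forms (n + 1)) :
    ⟪laplacian x, x⟫ ≤ (n + 2) * ‖x‖ ^ 2 := by
  rw [inner_laplacian, ← real_inner_self_eq_norm_sq, inner_def]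
  exact innerU_bdryAdjW_self_le Fact.out (isForm_val x)

lemma bdryAdjWMap_eq_zero_iff (x : X.Forms (n + 1)) :
    bdryAdjWMap x = 0 ↔ ∀ g : X.Forms (n + 2), ⟪bdryMap g, x⟫ = 0 := by
  simp only [inner_bdryMap]
  refine ⟨fun h g => by simp [h, innerU], fun h => val_injective ?_⟩
  exact (eq_zero_of_innerU_self (h (bdryAdjWMap x))).trans (map_zero _).symm

lemma ker_laplacian :
    LinearMap.ker (laplacian : Module.End ℝ (X.Forms (n + 1))) =
      (LinearMap.range (bdryMap : X.Forms (n + 2) →ₗ[ℝ] X.Forms (n + 1)))ᗮ := by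
  ext x
  simp only [LinearMap.mem_ker, Submodule.mem_orthogonal, LinearMap.mem_range,
    forall_exists_index, forall_apply_eq_imp_iff, ← bdryAdjWMap_eq_zero_iff]
  refine ⟨fun h => val_injective ?_, fun h => by simp [laplacian, h]⟩
  have := inner_laplacian x x
  rw [h, inner_zero_left] at this
  exact (eq_zero_of_innerU_self this.symm).trans (map_zero _).symm

lemma nexp_eq_val {p : ℝ} (hp : p * n + 1 ≠ 0) {σ₀ : Fin (n + 1) → V} (hσ₀ : X.IsCellT σ₀)
    (k : ℕ) :
    X.nexp p σ₀ k = val (((1 - ((1 - p) / (p * n + 1)) • laplacian) ^ k) (dirac hσ₀)) := by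
  have hsemi : Function.Semiconj (val : X.Forms (n + 1) → (Fin (n + 1) → V) → ℝ)
      (1 - ((1 - p) / (p * n + 1)) • laplacian : Module.End ℝ (X.Forms (n + 1)))
      (fun f => ((n + 1) / (p * n + 1)) • X.transOp p f) := fun x => by
    simp [smul_transOp hp, val_laplacian]
  rw [nexp_eq_iterate, Module.End.pow_apply, hsemi.iterate_right]
  rfl

theorem tendsto_nexp {p : ℝ} (hp : (n : ℝ) < p * (3 * n + 2)) (hp₁ : p < 1)
    {σ₀ : Fin (n + 1) → V} (hσ₀ : X.IsCellT σ₀) :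
    Tendsto (X.nexp p σ₀) atTop
      (𝓝 (val ((LinearMap.ker laplacian).starProjection (dirac hσ₀)))) := by
  have hden : 0 < p * n + 1 := by nlinarith
  have ht : 0 < (1 - p) / (p * n + 1) := div_pos (by linarith) hden
  have htΛ : (1 - p) / (p * n + 1) * (n + 2) < 2 := by
    rw [div_mul_eq_mul_div, div_lt_iff₀ hden]
    nlinarith
  simp_rw [funext (nexp_eq_val hden.ne' hσ₀)]
  exact (continuous_val.tendsto _).comp <| laplacian_isSymmetric.tendsto_pow_one_sub_smul_apply
    inner_laplacian_self_nonneg ht inner_laplacian_self_le htΛ _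

end Laplacian

section Homology

variable {m : ℕ}

lemma ker_bdryMap_le_range_bdryMap_iff :
    LinearMap.ker (bdryMap : X.Forms (m + 2) →ₗ[ℝ] X.Forms (m + 1)) ≤
        LinearMap.range (bdryMap : X.Forms (m + 3) →ₗ[ℝ] X.Forms (m + 2)) ↔
      ∀ f, X.IsForm (m + 2) f → X.bdry f = 0 → ∃ g, X.IsForm (m + 3) g ∧ X.bdry g = f := by
  refine ⟨fun h f hf hbf => ?_, fun h x hx => ?_⟩
  · obtain ⟨g, hg⟩ := h (x := mk f hf) (val_injective (by simpa [val_bdryMap] using hbf))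
    exact ⟨val g, isForm_val g, congrArg val hg⟩
  · obtain ⟨g, hg, hgx⟩ :=
      h (val x) (isForm_val x) (by simpa [val_bdryMap] using congrArg val hx)
    exact ⟨mk g hg, val_injective hgx⟩

variable [Fact (X.DegPos (m + 2))]

lemma isClosedForm_val_iff (x : X.Forms (m + 2)) :
    X.IsClosedForm m (val x) ↔
      x ∈ (LinearMap.range (bdryMap : X.Forms (m + 3) →ₗ[ℝ] X.Forms (m + 2)))ᗮ := by
  simp only [IsClosedForm, isForm_val x, true_and, Submodule.mem_orthogonal, LinearMap.mem_range,
    forall_exists_index, forall_apply_eq_imp_iff, inner_def, val_bdryMap, X.innerW_comm _ (val x)]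
  exact ⟨fun h g => h _ (isForm_val g), fun h g hg => h (mk g hg)⟩

lemma isExactForm_val_iff (x : X.Forms (m + 2)) :
    X.IsExactForm m (val x) ↔
      x ∈ LinearMap.range (bdryAdjUMap : X.Forms (m + 1) →ₗ[ℝ] X.Forms (m + 2)) := by
  have hadj (g : X.Forms (m + 1)) (h : X.Forms (m + 2)) :
      ⟪bdryAdjUMap g, h⟫ = innerU (val g) (X.bdry (val h)) :=
    innerW_bdryAdjU Fact.out _ (isForm_val h)
  refine ⟨fun ⟨_, g, hg, hx⟩ => ⟨mk g hg, ext_inner_right ℝ fun h => ?_⟩, ?_⟩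
  · rw [hadj, inner_def, hx _ (isForm_val h), val_mk]
  · rintro ⟨g, rfl⟩
    exact ⟨isForm_val _, val g, isForm_val g, fun h hh => hadj g (mk h hh)⟩

lemma ker_bdryMap :
    LinearMap.ker (bdryMap : X.Forms (m + 2) →ₗ[ℝ] X.Forms (m + 1)) =
      (LinearMap.range (bdryAdjUMap : X.Forms (m + 1) →ₗ[ℝ] X.Forms (m + 2)))ᗮ := by
  ext x
  simp only [LinearMap.mem_ker, Submodule.mem_orthogonal, LinearMap.mem_range,
    forall_exists_index, forall_apply_eq_imp_iff, inner_def, val_bdryAdjUMap,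
    innerW_bdryAdjU Fact.out _ (isForm_val x)]
  refine ⟨fun h g => ?_, fun h => val_injective ?_⟩
  · have hb : X.bdry (val x) = 0 := by simpa [val_bdryMap] using congrArg val h
    simp [hb, innerU]
  · exact (eq_zero_of_innerU_self (h (bdryMap x))).trans (map_zero _).symm

lemma inner_dirac {σ : Fin (m + 2) → V} (hσ : X.IsCellT σ) (x : X.Forms (m + 2)) :
    ⟪dirac hσ, x⟫ = val x σ / X.degT σ := by
  rw [inner_def, innerW_comm]
  exact innerW_dirac (isForm_val x) hσ

lemma eq_zero_of_forall_inner_dirac (x : X.Forms (m + 2))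
    (hx : ∀ σ : {σ : Fin (m + 2) → V // X.IsCellT σ}, ⟪dirac σ.2, x⟫ = 0) : x = 0 := by
  refine val_injective (funext fun σ => ?_)
  by_cases hσ : X.IsCellT σ
  · have := hx ⟨σ, hσ⟩
    rw [inner_dirac, div_eq_zero_iff] at this
    exact this.resolve_right (Nat.cast_ne_zero.2 (Fact.out (p := X.DegPos (m + 2)) σ hσ).ne')
  · exact (isForm_val x).1 σ hσ

lemma isClosedForm_val_starProjection (x : X.Forms (m + 2)) :
    X.IsClosedForm m (val ((LinearMap.ker laplacian).starProjection x)) := by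
  rw [isClosedForm_val_iff, ← ker_laplacian]
  exact Submodule.starProjection_apply_mem _ _

lemma innerW_sub_starProjection (x : X.Forms (m + 2)) {z : (Fin (m + 2) → V) → ℝ}
    (hz : X.IsClosedForm m z) :
    X.innerW (val x - val ((LinearMap.ker laplacian).starProjection x)) z = 0 := by
  obtain ⟨z, rfl⟩ : ∃ z', val z' = z := ⟨mk z hz.1, rfl⟩
  rw [isClosedForm_val_iff, ← ker_laplacian] at hz
  rw [← map_sub]
  exact Submodule.starProjection_inner_eq_zero x z hz

lemma forall_isExactForm_starProjection_dirac_iff :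
    (∀ σ : {σ : Fin (m + 2) → V // X.IsCellT σ},
        X.IsExactForm m (val ((LinearMap.ker laplacian).starProjection (dirac σ.2)))) ↔
      LinearMap.ker (bdryMap : X.Forms (m + 2) →ₗ[ℝ] X.Forms (m + 1)) ≤
        LinearMap.range (bdryMap : X.Forms (m + 3) →ₗ[ℝ] X.Forms (m + 2)) := by
  simp only [isExactForm_val_iff]
  rw [Submodule.le_iff_forall_starProjection_mem eq_zero_of_forall_inner_dirac, ker_laplacian,
    ker_bdryMap, Submodule.orthogonal_le_iff_orthogonal_le]

end Homology

end Forms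

end SComplex

theorem stmt0_general {V : Type*} [Fintype V] (m : ℕ) (X : SComplex V)
    (huni : ∀ s ∈ X.cells, ∃ t ∈ X.cells, t.card = m + 3 ∧ s ⊆ t)
    (p : ℝ) (hp₁ : ((m + 2 : ℝ) - 1) / (3 * (m + 2 : ℝ) - 1) < p) (hp₂ : p < 1) :
    (∀ σ₀ : Fin (m + 2) → V, X.IsCellT σ₀ →
        ∃ L : (Fin (m + 2) → V) → ℝ,
          Tendsto (fun nn => X.nexp p σ₀ nn) atTop (𝓝 L) ∧
          X.IsClosedForm m L ∧
          ∀ z, X.IsClosedForm m z → X.innerW (dirac σ₀ - L) z = 0) ∧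
      ((∀ σ₀ : Fin (m + 2) → V, X.IsCellT σ₀ →
          ∀ L, Tendsto (fun nn => X.nexp p σ₀ nn) atTop (𝓝 L) → X.IsExactForm m L) ↔
        ∀ f : (Fin (m + 2) → V) → ℝ, X.IsForm (m + 2) f → X.bdry f = 0 →
          ∃ g : (Fin (m + 3) → V) → ℝ, X.IsForm (m + 3) g ∧ X.bdry g = f) := by
  have : Fact (X.DegPos (m + 2)) := ⟨degPos_of_uniform huni⟩
  have hp : ((m + 1 : ℕ) : ℝ) < p * (3 * (m + 1 : ℕ) + 2) := by
    rw [div_lt_iff₀ (by linarith)] at hp₁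
    push_cast
    linarith
  have hlim {σ₀ : Fin (m + 2) → V} (hσ₀ : X.IsCellT σ₀) := Forms.tendsto_nexp hp hp₂ hσ₀
  refine ⟨fun σ₀ hσ₀ => ⟨_, hlim hσ₀, Forms.isClosedForm_val_starProjection _,
    fun z hz => Forms.innerW_sub_starProjection (Forms.dirac hσ₀) hz⟩, ?_⟩
  refine Iff.trans ?_ (Forms.forall_isExactForm_starProjection_dirac_iff.trans
    Forms.ker_bdryMap_le_range_bdryMap_iff)
  exact ⟨fun h σ => h σ.1 σ.2 _ (hlim σ.2),
    fun h σ₀ hσ₀ L hL => tendsto_nhds_unique (hlim hσ₀) hL ▸ h ⟨σ₀, hσ₀⟩⟩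

/-- For a finite uniform `d`-dimensional complex (`d = m+2 ≥ 2`) and
`(d-1)/(3d-1) < p < 1`, the normalized expectation process of the `p`-lazy
`(d-1)`-walk started at any oriented `(d-1)`-cell `σ₀` converges, its limit is the
orthogonal projection of `𝟙_{σ₀}` onto the closed forms `Z^{d-1}`, and the limit is
exact for every starting cell iff the real `(d-1)`-homology of `X` vanishes. -/
theorem stmt0 {V : Type*} [Fintype V] (m : ℕ) (X : SComplex V)
    (hdim : ∀ s ∈ X.cells, s.card ≤ m + 3)
    (huni : ∀ s ∈ X.cells, ∃ t ∈ X.cells, t.card = m + 3 ∧ s ⊆ t)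
    (htop : ∃ s ∈ X.cells, s.card = m + 3)
    (p : ℝ) (hp₁ : ((m + 2 : ℝ) - 1) / (3 * (m + 2 : ℝ) - 1) < p) (hp₂ : p < 1) :
    (∀ σ₀ : Fin (m + 2) → V, X.IsCellT σ₀ →
        ∃ L : (Fin (m + 2) → V) → ℝ,
          Tendsto (fun nn => X.nexp p σ₀ nn) atTop (𝓝 L) ∧
          X.IsClosedForm m L ∧
          ∀ z, X.IsClosedForm m z → X.innerW (dirac σ₀ - L) z = 0) ∧
      ((∀ σ₀ : Fin (m + 2) → V, X.IsCellT σ₀ →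
          ∀ L, Tendsto (fun nn => X.nexp p σ₀ nn) atTop (𝓝 L) → X.IsExactForm m L) ↔
        ∀ f : (Fin (m + 2) → V) → ℝ, X.IsForm (m + 2) f → X.bdry f = 0 →
          ∃ g : (Fin (m + 3) → V) → ℝ, X.IsForm (m + 3) g ∧ X.bdry g = f) :=
  stmt0_general m X huni p hp₁ hp₂
end
end

section
/- For every r and every real eigenvalue λ of any of the matrices M_{++}^{(r)} = M_{+−}^{(r)} (r ≥ 1), M_{−−}^{(r)} (r ≥ 1), or M_{−+}^{(r)} (r ≥ 0), either λ = 0 or λ > 3/2 − √2. -/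
/-!
Put `μ = 3/2 - λ`. Below the first row, the eigenvalue equation of each of the three matrices is
the recurrence `a (k+2) = μ a (k+1) - a k / 2`, closed by `a m = (μ + 1/2) a (m+1)`; the first row
only fixes the initial ratio `a 1 = θ a 0`. The ratios `a (k+1) / a k` evolve by the increasing map
`ρ ↦ μ - 1/(2ρ)`, whose fixed points, the roots of `x² - μx + 1/2`, are real when `μ ≥ √2`. Hence
ratios starting above a point `γ` between the fixed points stay above `γ`, and ratios starting
below the fixed points stay below their start until `a` changes sign, after which they stay above
`μ/2`, again a point between the fixed points. So the last ratio cannot be `1/(μ + 1/2)` when this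
value lies on the wrong side, and then `a = 0`. For `M₋₋` take `γ = μ/2`; for `M₊₊` and `M₋₊` the
side is decided by the sign of `λ`, which is where `λ = 0` slips through.
-/

noncomputable section

/-- The tridiagonal matrix `M₋₋⁽ʳ⁾` (with `M₋₋⁽¹⁾ = (0)`). -/
def Mmm (r : ℕ) : Matrix (Fin r) (Fin r) ℝ := fun i j =>
  if r = 1 then 0
  else if i = j then (if (i : ℕ) = r - 1 then 2 else 3 / 2)
  else if (j : ℕ) = (i : ℕ) + 1 then -1
  else if (i : ℕ) = (j : ℕ) + 1 then (if (i : ℕ) = r - 1 then -1 else -1 / 2)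
  else 0

/-- The tridiagonal matrix `M₊₊⁽ʳ⁾ = M₊₋⁽ʳ⁾`: as `M₋₋⁽ʳ⁾` but with `(1,1)` entry `1/2`
(and `M₊₊⁽¹⁾ = (0)`). -/
def Mpp (r : ℕ) : Matrix (Fin r) (Fin r) ℝ := fun i j =>
  if r = 1 then 0
  else if (i : ℕ) = 0 ∧ (j : ℕ) = 0 then 1 / 2
  else Mmm r i j

/-- The `(r+1) × (r+1)` matrix `M₋₊⁽ʳ⁾` with first row `(1, -2, 0, …, 0)`. -/
def Mmp (r : ℕ) : Matrix (Fin (r + 1)) (Fin (r + 1)) ℝ := fun i j =>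
  if (i : ℕ) = 0 then (if (j : ℕ) = 0 then 1 else if (j : ℕ) = 1 then -2 else 0)
  else if i = j then (if (i : ℕ) = r then 2 else 3 / 2)
  else if (j : ℕ) = (i : ℕ) + 1 then -1
  else if (i : ℕ) = (j : ℕ) + 1 then (if (i : ℕ) = r then -1 else -1 / 2)
  else 0

/-- All rows but the first of `(M₋₋⁽ᵐ⁺²⁾ - λ) a = 0`, with `μ = 3/2 - λ`. -/
structure TailEqns (μ : ℝ) (m : ℕ) (a : ℕ → ℝ) : Prop where
  interior : ∀ k < m, a (k + 2) = μ * a (k + 1) - a k / 2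
  last : a m = (μ + 1 / 2) * a (m + 1)

namespace TailEqns

variable {μ γ θ : ℝ} {m : ℕ} {a : ℕ → ℝ}

theorem neg (h : TailEqns μ m a) : TailEqns μ m (-a) where
  interior k hk := by simp only [Pi.neg_apply, h.interior k hk]; ring
  last := by simp only [Pi.neg_apply, h.last]; ring

theorem eq_zero_of_head_eq_zero (h : TailEqns μ m a) (h0 : a 0 = 0) (h01 : a 1 = θ * a 0) :
    ∀ k < m + 2, a k = 0 := by
  have key : ∀ k ≤ m, a k = 0 ∧ a (k + 1) = 0 := by
    intro k hk
    induction k with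
    | zero => simp [h0, h01]
    | succ k ih =>
      obtain ⟨hk0, hk1⟩ := ih (by omega)
      exact ⟨hk1, by rw [h.interior k (by omega), hk0, hk1]; ring⟩
  intro k hk
  rcases Nat.lt_or_ge k (m + 1) with hkm | hkm
  · exact (key k (by omega)).1
  · obtain rfl : k = m + 1 := by omega
    exact (key m le_rfl).2

theorem eq_zero_of_forall_pos_false (h : TailEqns μ m a) (h01 : a 1 = θ * a 0)
    (hpos : ∀ b : ℕ → ℝ, TailEqns μ m b → b 1 = θ * b 0 → 0 < b 0 → False) :
    ∀ k < m + 2, a k = 0 := by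
  refine h.eq_zero_of_head_eq_zero ?_ h01
  rcases lt_trichotomy (a 0) 0 with hneg | hzero | hpos'
  · exact (hpos (-a) h.neg (by simp [h01]) (by simpa using hneg)).elim
  · exact hzero
  · exact (hpos a h h01 hpos').elim

theorem ratio_ge_step (hγ : 0 < γ) (hγμ : γ ^ 2 + 1 / 2 ≤ μ * γ) {k : ℕ}
    (hrec : a (k + 2) = μ * a (k + 1) - a k / 2) (hpos : 0 < a (k + 1))
    (hratio : γ * a k ≤ a (k + 1)) : 0 < a (k + 2) ∧ γ * a (k + 1) ≤ a (k + 2) := by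
  have hge : γ * a (k + 1) ≤ a (k + 2) := by
    rw [hrec]; nlinarith [mul_le_mul_of_nonneg_right hγμ hpos.le]
  exact ⟨lt_of_lt_of_le (mul_pos hγ hpos) hge, hge⟩

theorem false_of_ratio_ge (h : TailEqns μ m a) (hγ : 0 < γ) (hγμ : γ ^ 2 + 1 / 2 ≤ μ * γ)
    (hγe : 1 < γ * (μ + 1 / 2)) (h1 : 0 < a 1) (h01 : γ * a 0 ≤ a 1) : False := by
  have key : ∀ k ≤ m, 0 < a (k + 1) ∧ γ * a k ≤ a (k + 1) := by
    intro k hk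
    induction k with
    | zero => exact ⟨h1, h01⟩
    | succ k ih =>
      obtain ⟨hpos, hratio⟩ := ih (by omega)
      exact ratio_ge_step hγ hγμ (h.interior k (by omega)) hpos hratio
  obtain ⟨hpos, hratio⟩ := key m le_rfl
  rw [h.last] at hratio
  nlinarith

theorem false_of_ratio_le (h : TailEqns μ m a) (hμ : 2 ≤ μ ^ 2) (hμ0 : 0 < μ) (hθ : 0 < θ)
    (hθμ : μ * θ ≤ θ ^ 2 + 1 / 2) (hθe : θ * (μ + 1 / 2) < 1) (h0 : 0 < a 0)
    (h01 : a 1 ≤ θ * a 0) : False := by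
  have key : ∀ k ≤ m, (0 < a k ∧ a (k + 1) ≤ θ * a k) ∨
      (0 < -a (k + 1) ∧ μ / 2 * -a k ≤ -a (k + 1)) := by
    intro k hk
    induction k with
    | zero => exact Or.inl ⟨h0, h01⟩
    | succ k ih =>
      have hrec := h.interior k (by omega)
      rcases ih (by omega) with ⟨hpos, hratio⟩ | hneg
      · rcases lt_or_ge 0 (a (k + 1)) with hpos1 | hnonpos1
        · left
          refine ⟨hpos1, ?_⟩
          rw [hrec]
          nlinarith [mul_le_mul_of_nonneg_right hθμ hpos1.le]
        · right
          constructor <;> rw [hrec] <;> nlinarith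
      · right
        exact ratio_ge_step (μ := μ) (γ := μ / 2) (a := -a) (by positivity) (by nlinarith)
          (by simp only [Pi.neg_apply, hrec]; ring) hneg.1 hneg.2
  rcases key m le_rfl with ⟨hpos, hratio⟩ | ⟨hneg, hratio⟩
  · rw [h.last] at hpos hratio
    nlinarith
  · rw [h.last] at hratio
    nlinarith

/-- Both factors are negative when `θ` lies strictly between the fixed points of `ρ ↦ μ - 1/(2ρ)`
and above `1/(μ + 1/2)`, both positive when it lies outside them and below `1/(μ + 1/2)`. -/
theorem eq_zero_of_mul_pos (h : TailEqns μ m a) (hμ : 2 ≤ μ ^ 2) (hμ0 : 0 < μ) (hθ : 0 < θ)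
    (hcross : 0 < (θ ^ 2 + 1 / 2 - μ * θ) * (1 - θ * (μ + 1 / 2))) (h01 : a 1 = θ * a 0) :
    ∀ k < m + 2, a k = 0 := by
  refine h.eq_zero_of_forall_pos_false h01 fun b hb hb01 hb0 => ?_
  rcases pos_and_pos_or_neg_and_neg_of_mul_pos hcross with ⟨hθμ, hθe⟩ | ⟨hθμ, hθe⟩
  · exact hb.false_of_ratio_le hμ hμ0 hθ (by linarith) (by linarith) hb0 hb01.le
  · exact hb.false_of_ratio_ge hθ (by linarith) (by linarith) (by rw [hb01]; positivity) hb01.ge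

end TailEqns

def zeroExtend {n : ℕ} (v : Fin n → ℝ) (k : ℕ) : ℝ := if h : k < n then v ⟨k, h⟩ else 0

theorem zeroExtend_of_lt {n : ℕ} (v : Fin n → ℝ) {k : ℕ} (hk : k < n) :
    zeroExtend v k = v ⟨k, hk⟩ :=
  dif_pos hk

theorem eq_zero_of_zeroExtend_eq_zero {n : ℕ} {v : Fin n → ℝ}
    (h : ∀ k < n, zeroExtend v k = 0) : v = 0 :=
  funext fun i => by simpa [zeroExtend_of_lt v i.isLt] using h i i.isLt

open Matrix

theorem Matrix.mulVec_apply_eq_sum_of_support {m n α : Type*} [Fintype n]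
    [NonUnitalNonAssocSemiring α] (M : Matrix m n α) (v : n → α) (i : m) (s : Finset n)
    (hs : ∀ j ∉ s, M i j = 0) :
    (M *ᵥ v) i = ∑ j ∈ s, M i j * v j := by
  rw [Matrix.mulVec, dotProduct]
  exact (Finset.sum_subset (Finset.subset_univ s) fun j _ hj => by simp [hs j hj]).symm

theorem Mmm_apply_eq_zero {n : ℕ} {i j : Fin n} (hij : (i : ℕ) ≠ j) (hsucc : (j : ℕ) ≠ i + 1)
    (hpred : (i : ℕ) ≠ j + 1) : Mmm n i j = 0 := by
  simp [Mmm, Fin.ext_iff, hij, hsucc, hpred]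

theorem Mpp_apply_of_ne_zero {n : ℕ} {i : Fin n} (hi : (i : ℕ) ≠ 0) (j : Fin n) :
    Mpp n i j = Mmm n i j := by
  by_cases hn : n = 1 <;> simp [Mpp, Mmm, hn, hi]

theorem Mmp_apply_of_ne_zero {m : ℕ} {i : Fin (m + 2)} (hi : (i : ℕ) ≠ 0) (j : Fin (m + 2)) :
    Mmp (m + 1) i j = Mmm (m + 2) i j := by
  simp [Mmp, Mmm, hi]

theorem two_le_sq_of_le_sub_sqrt_two {lam : ℝ} (hle : lam ≤ 3 / 2 - √2) :
    2 ≤ (3 / 2 - lam) ^ 2 ∧ 0 < 3 / 2 - lam := by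
  have hsqrt : √2 ≤ 3 / 2 - lam := by linarith
  have hpos : 0 < √2 := by positivity
  exact ⟨(Real.sqrt_le_left (by linarith)).1 hsqrt, by linarith⟩

section EigenEquations

variable {m : ℕ} (v : Fin (m + 2) → ℝ)

theorem Mmm_mulVec_zero :
    (Mmm (m + 2) *ᵥ v) ⟨0, by omega⟩ = 3 / 2 * v ⟨0, by omega⟩ - v ⟨1, by omega⟩ := by
  rw [Matrix.mulVec_apply_eq_sum_of_support _ _ _ {⟨0, by omega⟩, ⟨1, by omega⟩},
    Finset.sum_pair (by simp)]
  · simp [Mmm, sub_eq_add_neg]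
  · intro j hj
    simp only [Finset.mem_insert, Finset.mem_singleton, not_or, Fin.ext_iff] at hj
    exact Mmm_apply_eq_zero (by simp; omega) (by simp; omega) (by simp)

theorem Mmm_mulVec_succ {k : ℕ} (hk : k < m) :
    (Mmm (m + 2) *ᵥ v) ⟨k + 1, by omega⟩ =
      -1 / 2 * v ⟨k, by omega⟩ + 3 / 2 * v ⟨k + 1, by omega⟩ - v ⟨k + 2, by omega⟩ := by
  rw [Matrix.mulVec_apply_eq_sum_of_support _ _ _
    {⟨k, by omega⟩, ⟨k + 1, by omega⟩, ⟨k + 2, by omega⟩},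
    Finset.sum_insert (by simp), Finset.sum_pair (by simp)]
  · simp [Mmm, hk.ne, sub_eq_add_neg, add_assoc]
  · intro j hj
    simp only [Finset.mem_insert, Finset.mem_singleton, not_or, Fin.ext_iff] at hj
    exact Mmm_apply_eq_zero (by simp; omega) (by simp; omega) (by simp; omega)

theorem Mmm_mulVec_last :
    (Mmm (m + 2) *ᵥ v) ⟨m + 1, by omega⟩ = -v ⟨m, by omega⟩ + 2 * v ⟨m + 1, by omega⟩ := by
  rw [Matrix.mulVec_apply_eq_sum_of_support _ _ _ {⟨m, by omega⟩, ⟨m + 1, by omega⟩},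
    Finset.sum_pair (by simp [Fin.ext_iff])]
  · simp [Mmm, Fin.ext_iff]
  · intro j hj
    simp only [Finset.mem_insert, Finset.mem_singleton, not_or, Fin.ext_iff] at hj
    exact Mmm_apply_eq_zero (by simp; omega) (by simp; omega) (by simp; omega)

theorem Mpp_mulVec_zero :
    (Mpp (m + 2) *ᵥ v) ⟨0, by omega⟩ = 1 / 2 * v ⟨0, by omega⟩ - v ⟨1, by omega⟩ := by
  rw [Matrix.mulVec_apply_eq_sum_of_support _ _ _ {⟨0, by omega⟩, ⟨1, by omega⟩},
    Finset.sum_pair (by simp)]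
  · simp [Mpp, Mmm, sub_eq_add_neg]
  · intro j hj
    simp only [Finset.mem_insert, Finset.mem_singleton, not_or, Fin.ext_iff] at hj
    simp [Mpp, hj.1, Mmm_apply_eq_zero (i := 0) (j := j) (by simp; omega) (by simp; omega)
      (by simp)]

theorem Mmp_mulVec_zero :
    (Mmp (m + 1) *ᵥ v) ⟨0, by omega⟩ = v ⟨0, by omega⟩ - 2 * v ⟨1, by omega⟩ := by
  rw [Matrix.mulVec_apply_eq_sum_of_support _ _ _ {⟨0, by omega⟩, ⟨1, by omega⟩},
    Finset.sum_pair (by simp)]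
  · simp [Mmp, sub_eq_add_neg]
  · intro j hj
    simp only [Finset.mem_insert, Finset.mem_singleton, not_or, Fin.ext_iff] at hj
    simp [Mmp, hj.1, hj.2]

variable {lam : ℝ} {M : Matrix (Fin (m + 2)) (Fin (m + 2)) ℝ}

theorem tailEqns_of_rows_eq_Mmm
    (hrows : ∀ i : Fin (m + 2), (i : ℕ) ≠ 0 → ∀ j, M i j = Mmm (m + 2) i j)
    (hM : M *ᵥ v = lam • v) : TailEqns (3 / 2 - lam) m (zeroExtend v) := by
  have hv (i : Fin (m + 2)) (hi : (i : ℕ) ≠ 0) : (Mmm (m + 2) *ᵥ v) i = lam * v i := by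
    simpa only [Matrix.mulVec, hrows i hi, Pi.smul_apply, smul_eq_mul] using congrFun hM i
  constructor
  · intro k hk
    have hrow := hv ⟨k + 1, by omega⟩ (by simp)
    rw [Mmm_mulVec_succ v hk] at hrow
    rw [zeroExtend_of_lt v (by omega : k + 2 < m + 2),
      zeroExtend_of_lt v (by omega : k + 1 < m + 2), zeroExtend_of_lt v (by omega : k < m + 2)]
    linarith
  · have hrow := hv ⟨m + 1, by omega⟩ (by simp)
    rw [Mmm_mulVec_last] at hrow
    rw [zeroExtend_of_lt v (by omega : m < m + 2), zeroExtend_of_lt v (by omega : m + 1 < m + 2)]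
    linarith

theorem zeroExtend_one_eq_of_head_row {c d : ℝ} (hM : M *ᵥ v = lam • v)
    (hrow : (M *ᵥ v) ⟨0, by omega⟩ = c * v ⟨0, by omega⟩ - d * v ⟨1, by omega⟩) (hd : d ≠ 0) :
    zeroExtend v 1 = (c - lam) / d * zeroExtend v 0 := by
  rw [congrFun hM, Pi.smul_apply, smul_eq_mul] at hrow
  rw [zeroExtend_of_lt v (by omega : 1 < m + 2), zeroExtend_of_lt v (by omega : 0 < m + 2)]
  field_simp
  linarith

theorem Mmm_eigenvector_eq_zero (hle : lam ≤ 3 / 2 - √2) (hM : Mmm (m + 2) *ᵥ v = lam • v) :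
    v = 0 := by
  obtain ⟨hμ, hμ0⟩ := two_le_sq_of_le_sub_sqrt_two hle
  have htail := tailEqns_of_rows_eq_Mmm v (fun _ _ _ => rfl) hM
  have h01 := zeroExtend_one_eq_of_head_row v (c := 3 / 2) hM
    (by rw [Mmm_mulVec_zero]; ring) one_ne_zero
  rw [div_one] at h01
  refine eq_zero_of_zeroExtend_eq_zero
    (htail.eq_zero_of_forall_pos_false h01 fun b hb hb01 hb0 => ?_)
  exact hb.false_of_ratio_ge (γ := (3 / 2 - lam) / 2) (by positivity) (by nlinarith) (by nlinarith)
    (by rw [hb01]; positivity) (by rw [hb01]; nlinarith)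

theorem Mpp_eigenvector_eq_zero (hlam : lam ≠ 0) (hle : lam ≤ 3 / 2 - √2)
    (hM : Mpp (m + 2) *ᵥ v = lam • v) : v = 0 := by
  obtain ⟨hμ, hμ0⟩ := two_le_sq_of_le_sub_sqrt_two hle
  have htail := tailEqns_of_rows_eq_Mmm v (fun _ hi j => Mpp_apply_of_ne_zero hi j) hM
  have h01 := zeroExtend_one_eq_of_head_row v (c := 1 / 2) hM
    (by rw [Mpp_mulVec_zero]; ring) one_ne_zero
  rw [div_one] at h01
  refine eq_zero_of_zeroExtend_eq_zero (htail.eq_zero_of_mul_pos hμ hμ0 ?_ ?_ h01)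
  · nlinarith
  · have hprod : ((1 / 2 - lam) ^ 2 + 1 / 2 - (3 / 2 - lam) * (1 / 2 - lam)) *
        (1 - (1 / 2 - lam) * (3 / 2 - lam + 1 / 2)) = lam ^ 2 * (5 / 2 - lam) := by ring
    rw [hprod]
    exact mul_pos (by positivity) (by linarith)

theorem Mmp_eigenvector_eq_zero (hlam : lam ≠ 0) (hle : lam ≤ 3 / 2 - √2)
    (hM : Mmp (m + 1) *ᵥ v = lam • v) : v = 0 := by
  obtain ⟨hμ, hμ0⟩ := two_le_sq_of_le_sub_sqrt_two hle
  have htail := tailEqns_of_rows_eq_Mmm v (fun _ hi j => Mmp_apply_of_ne_zero hi j) hM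
  have h01 := zeroExtend_one_eq_of_head_row v (c := 1) hM
    (by rw [Mmp_mulVec_zero]; ring) two_ne_zero
  refine eq_zero_of_zeroExtend_eq_zero (htail.eq_zero_of_mul_pos hμ hμ0 ?_ ?_ h01)
  · nlinarith
  · have hprod : (((1 - lam) / 2) ^ 2 + 1 / 2 - (3 / 2 - lam) * ((1 - lam) / 2)) *
        (1 - (1 - lam) / 2 * (3 / 2 - lam + 1 / 2)) = lam ^ 2 * (3 - lam) ^ 2 / 8 := by ring
    rw [hprod]
    have : 0 < lam ^ 2 := by positivity
    have : 0 < (3 - lam) ^ 2 := by nlinarith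
    positivity

end EigenEquations

theorem Mmp_zero_eigenvalue_eq_one {lam : ℝ} {v : Fin 1 → ℝ} (hv : v ≠ 0)
    (hM : Mmp 0 *ᵥ v = lam • v) : lam = 1 := by
  have hv0 : v 0 ≠ 0 := fun h => hv (funext fun i => by rw [Subsingleton.elim i 0, h]; rfl)
  have hrow : v 0 = lam * v 0 := by simpa [Matrix.mulVec, dotProduct, Mmp] using congrFun hM 0
  exact mul_right_cancel₀ hv0 (hrow.symm.trans (one_mul _).symm)

/-- Every real eigenvalue of any of the matrices
`M₊₊⁽ʳ⁾ = M₊₋⁽ʳ⁾` (`r ≥ 1`), `M₋₋⁽ʳ⁾` (`r ≥ 1`), `M₋₊⁽ʳ⁾` (`r ≥ 0`) is either `0` or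
greater than `3/2 - √2`. -/
theorem stmt11 :
    (∀ (r : ℕ), 1 ≤ r → ∀ (lam : ℝ) (v : Fin r → ℝ), v ≠ 0 →
      (Mpp r).mulVec v = lam • v → lam = 0 ∨ 3 / 2 - Real.sqrt 2 < lam) ∧
    (∀ (r : ℕ), 1 ≤ r → ∀ (lam : ℝ) (v : Fin r → ℝ), v ≠ 0 →
      (Mmm r).mulVec v = lam • v → lam = 0 ∨ 3 / 2 - Real.sqrt 2 < lam) ∧
    (∀ (r : ℕ) (lam : ℝ) (v : Fin (r + 1) → ℝ), v ≠ 0 →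
      (Mmp r).mulVec v = lam • v → lam = 0 ∨ 3 / 2 - Real.sqrt 2 < lam) := by
  have hsize (r : ℕ) (hr : 1 ≤ r) : r = 1 ∨ ∃ m, r = m + 2 := by
    rcases r with _ | _ | m
    exacts [absurd hr (by norm_num), Or.inl rfl, Or.inr ⟨m, rfl⟩]
  have hzero {n : ℕ} {M : Matrix (Fin n) (Fin n) ℝ} (h0 : M = 0) {lam : ℝ} {v : Fin n → ℝ}
      (hv : v ≠ 0) (hM : M *ᵥ v = lam • v) : lam = 0 :=
    (smul_eq_zero.mp (by rw [← hM, h0, Matrix.zero_mulVec])).resolve_right hv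
  refine ⟨fun r hr lam v hv hM => ?_, fun r hr lam v hv hM => ?_, fun r lam v hv hM => ?_⟩
  · obtain rfl | ⟨m, rfl⟩ := hsize r hr
    · exact Or.inl (hzero (by ext; simp [Mpp]) hv hM)
    · by_contra! h
      exact hv (Mpp_eigenvector_eq_zero v h.1 h.2 hM)
  · obtain rfl | ⟨m, rfl⟩ := hsize r hr
    · exact Or.inl (hzero (by ext; simp [Mmm]) hv hM)
    · by_contra! h
      exact hv (Mmm_eigenvector_eq_zero v h.2 hM)
  · rcases r with _ | m
    · have hsqrt : (1 / 2) ^ 2 < (2 : ℝ) := by norm_num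
      have := (Real.lt_sqrt (by norm_num)).2 hsqrt
      rw [Mmp_zero_eigenvalue_eq_one hv hM]
      right
      linarith
    · by_contra! h
      exact hv (Mmp_eigenvector_eq_zero v h.1 h.2 hM)

end
end

section
/- Let H be a complex Hilbert space and A a bounded self-adjoint operator on H with 0 ≤ ⟨Af, f⟩ ≤ ⟨f, f⟩ for all f ∈ H. Let 0 < π ≤ 1 and set B = π·A + (1−π)·I. Then for every x ∈ H, Σ_{n=0}^∞ ⟨Bⁿx, x⟩ = (1/π)·Σ_{n=0}^∞ ⟨Aⁿx, x⟩ as an equality in [0, ∞]; in particular, one of these sums is finite if and only if the other is. -/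
/-!
Expanding `Bⁿ = (π A + (1 - π) I)ⁿ` binomially writes `⟨Bⁿ x, x⟩` as a mixture of the numbers
`⟨Aᵏ x, x⟩`, which are nonnegative because powers of a positive operator are positive. Summing
over `n` and exchanging the order of summation (legitimate in `[0, ∞]`), the total weight that
`⟨Aᵏ x, x⟩` receives is the negative binomial series `∑ₘ C(m + k, k) πᵏ (1 - π)ᵐ = 1 / π`.
-/

open Finset
open scoped ENNReal

theorem smul_add_smul_one_pow {R A : Type*} [CommSemiring R] [Semiring A] [Algebra R A]
    (r s : R) (a : A) (n : ℕ) :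
    (r • a + s • 1) ^ n = ∑ k ∈ range (n + 1), (n.choose k * r ^ k * s ^ (n - k)) • a ^ k := by
  rw [((Commute.one_right a).smul_left r).smul_right s |>.add_pow]
  refine sum_congr rfl fun k _ ↦ ?_
  rw [smul_pow, smul_pow, one_pow, smul_mul_smul_comm, mul_one, ← Nat.cast_comm, ← nsmul_eq_mul,
    ← Nat.cast_smul_eq_nsmul R, smul_smul, mul_assoc]

theorem hasSum_choose_mul_pow_mul_one_sub_pow {p : ℝ} (hp₀ : 0 < p) (hp₂ : p < 2) (k : ℕ) :
    HasSum (fun m ↦ (m + k).choose k * p ^ k * (1 - p) ^ m) (1 / p) := by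
  have hr : ‖1 - p‖ < 1 := by rw [Real.norm_eq_abs, abs_lt]; constructor <;> linarith
  have h := (hasSum_choose_mul_geometric_of_norm_lt_one k hr).mul_left (p ^ k)
  rw [sub_sub_cancel, pow_succ, ← div_div, mul_div_assoc', mul_one_div_cancel (by positivity)] at h
  simpa only [mul_comm, mul_assoc, mul_left_comm] using h

theorem ENNReal.tsum_sum_antidiagonal {A : Type*} [AddCommMonoid A] [HasAntidiagonal A]
    (f : A × A → ℝ≥0∞) : ∑' n, ∑ ij ∈ antidiagonal n, f ij = ∑' ij, f ij := by
  rw [← HasAntidiagonal.sigmaAntidiagonalEquivProd.tsum_eq, ENNReal.tsum_sigma']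
  simp [sum_attach]

theorem ENNReal.tsum_sum_range_binomial_mul {p : ℝ} (hp₀ : 0 < p) (hp₁ : p ≤ 1) (a : ℕ → ℝ≥0∞) :
    ∑' n, ∑ k ∈ range (n + 1), ENNReal.ofReal (n.choose k * p ^ k * (1 - p) ^ (n - k)) * a k =
      ENNReal.ofReal (1 / p) * ∑' k, a k := by
  set c : ℕ → ℕ → ℝ≥0∞ := fun k m ↦ ENNReal.ofReal ((m + k).choose k * p ^ k * (1 - p) ^ m)
  have hc (k : ℕ) : ∑' m, c k m = ENNReal.ofReal (1 / p) := by
    have h := hasSum_choose_mul_pow_mul_one_sub_pow hp₀ (by linarith) k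
    have hq : 0 ≤ 1 - p := sub_nonneg.2 hp₁
    rw [← ENNReal.ofReal_tsum_of_nonneg (fun m ↦ by positivity) h.summable, h.tsum_eq]
  calc _ = ∑' n, ∑ ij ∈ antidiagonal n, c ij.1 ij.2 * a ij.1 := by
        refine tsum_congr fun n ↦ ?_
        rw [Nat.sum_antidiagonal_eq_sum_range_succ fun k m ↦ c k m * a k]
        refine sum_congr rfl fun k hk ↦ ?_
        simp only [c, Nat.sub_add_cancel (Nat.lt_succ_iff.1 (mem_range.1 hk))]
    _ = ∑' k, (∑' m, c k m) * a k := by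
        rw [ENNReal.tsum_sum_antidiagonal, ENNReal.tsum_prod']
        simp_rw [ENNReal.tsum_mul_right]
    _ = _ := by simp_rw [hc, ENNReal.tsum_mul_left]

namespace ContinuousLinearMap

variable {𝕜 E : Type*} [RCLike 𝕜] [NormedAddCommGroup E] [InnerProductSpace 𝕜 E]

theorem IsPositive.pow [CompleteSpace E] {T : E →L[𝕜] E} (hT : T.IsPositive) (n : ℕ) :
    (T ^ n).IsPositive := by
  -- `T ^ (2m) = T ^ m * 1 * T ^ m` and `T ^ (2m+1) = T ^ m * T * T ^ m`, with `T ^ m` self-adjoint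
  have hconj {S : E →L[𝕜] E} (hS : S.IsPositive) (m : ℕ) : (T ^ m * S * T ^ m).IsPositive := by
    simpa [(hT.isSelfAdjoint.pow m).adjoint_eq, ← mul_def, mul_assoc] using hS.conj_adjoint (T ^ m)
  obtain ⟨m, rfl | rfl⟩ := n.even_or_odd'
  · simpa [← pow_add, two_mul] using hconj isPositive_one m
  · simpa [← pow_add, ← pow_succ, two_mul, add_right_comm] using hconj hT m

theorem re_inner_smul_add_smul_one_pow_apply (T : E →L[𝕜] E) (p : ℝ) (x : E) (n : ℕ) :
    RCLike.re (inner 𝕜 ((((p : 𝕜) • T + (1 - (p : 𝕜)) • 1) ^ n) x) x) =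
      ∑ k ∈ range (n + 1),
        n.choose k * p ^ k * (1 - p) ^ (n - k) * RCLike.re (inner 𝕜 ((T ^ k) x) x) := by
  rw [smul_add_smul_one_pow, FunLike.coe_sum, Finset.sum_apply, sum_inner, map_sum]
  refine sum_congr rfl fun k _ ↦ ?_
  have hcoeff : (n.choose k * (p : 𝕜) ^ k * (1 - (p : 𝕜)) ^ (n - k)) =
      ((n.choose k * p ^ k * (1 - p) ^ (n - k) : ℝ) : 𝕜) := by
    push_cast; ring
  rw [hcoeff, smul_apply, inner_smul_left, RCLike.conj_ofReal, RCLike.re_ofReal_mul]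

end ContinuousLinearMap

/-- Let `A` be a bounded self-adjoint operator on a complex Hilbert
space with `0 ≤ ⟨Af, f⟩ ≤ ⟨f, f⟩` for all `f`, let `0 < π ≤ 1` and
`B = π·A + (1-π)·I`. Then `Σₙ ⟨Bⁿx, x⟩ = (1/π)·Σₙ ⟨Aⁿx, x⟩` in `[0,∞]`; in particular
one sum is finite iff the other is. -/
theorem stmt15 {H : Type*} [NormedAddCommGroup H] [InnerProductSpace ℂ H]
    [CompleteSpace H]
    (A : H →L[ℂ] H) (hA : IsSelfAdjoint A)
    (hbdd : ∀ f : H, 0 ≤ (inner ℂ (A f) f : ℂ).re ∧ (inner ℂ (A f) f : ℂ).re ≤ (inner ℂ f f : ℂ).re)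
    (pp : ℝ) (hp₁ : 0 < pp) (hp₂ : pp ≤ 1) (x : H) :
    (∑' nn : ℕ, ENNReal.ofReal
        (inner ℂ ((((pp : ℂ) • A + (1 - (pp : ℂ)) • (1 : H →L[ℂ] H)) ^ nn) x) x : ℂ).re =
      ENNReal.ofReal (1 / pp) *
        ∑' nn : ℕ, ENNReal.ofReal (inner ℂ ((A ^ nn) x) x : ℂ).re) ∧
    ((∑' nn : ℕ, ENNReal.ofReal
        (inner ℂ ((((pp : ℂ) • A + (1 - (pp : ℂ)) • (1 : H →L[ℂ] H)) ^ nn) x) x : ℂ).re ≠ ⊤) ↔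
      (∑' nn : ℕ, ENNReal.ofReal (inner ℂ ((A ^ nn) x) x : ℂ).re ≠ ⊤)) := by
  have hApos : A.IsPositive := ContinuousLinearMap.isPositive_def'.2 ⟨hA, fun f ↦ (hbdd f).1⟩
  have hAk (k : ℕ) : 0 ≤ (inner ℂ ((A ^ k) x) x : ℂ).re := (hApos.pow k).re_inner_nonneg_left x
  have hq : 0 ≤ 1 - pp := sub_nonneg.2 hp₂
  have hterm (n : ℕ) : ENNReal.ofReal
      (inner ℂ ((((pp : ℂ) • A + (1 - (pp : ℂ)) • (1 : H →L[ℂ] H)) ^ n) x) x : ℂ).re =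
      ∑ k ∈ range (n + 1), ENNReal.ofReal (n.choose k * pp ^ k * (1 - pp) ^ (n - k)) *
        ENNReal.ofReal (inner ℂ ((A ^ k) x) x : ℂ).re := by
    have hexp : (inner ℂ ((((pp : ℂ) • A + (1 - (pp : ℂ)) • (1 : H →L[ℂ] H)) ^ n) x) x : ℂ).re =
        ∑ k ∈ range (n + 1), n.choose k * pp ^ k * (1 - pp) ^ (n - k) *
          (inner ℂ ((A ^ k) x) x : ℂ).re :=
      ContinuousLinearMap.re_inner_smul_add_smul_one_pow_apply A pp x n
    rw [hexp, ENNReal.ofReal_sum_of_nonneg fun k _ ↦ mul_nonneg (by positivity) (hAk k)]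
    exact sum_congr rfl fun k _ ↦ ENNReal.ofReal_mul (by positivity)
  have hsum := ENNReal.tsum_sum_range_binomial_mul hp₁ hp₂
    fun k ↦ ENNReal.ofReal (inner ℂ ((A ^ k) x) x : ℂ).re
  simp_rw [← hterm] at hsum
  refine ⟨hsum, ?_⟩
  rw [hsum]
  simp [ENNReal.mul_eq_top, hp₁]
end
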